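/- arXiv:0704.1554 — 8 statements merged into one kernel-verified Lean document; each statement's English description precedes it below -/
import Mathlib

section
/- Let A be a unital C*-algebra, let u be a unitary in A, and let p be a projection in A such that ‖up - pu‖ < 1. Then the element x = pup + (1-p)u(1-p) is invertible in A, and the unitary v = x(x*x)^{-1/2} from the polar decomposition of x commutes with p and is homotopic to u in the unitary group of A. -/
noncomputable section

/-- A projection in a *-ring. -/
def IsProjection {R : Type*} [Mul R] [Star R] (p : R) : Prop :=
  star p = p ∧ p * p = p

/-- Murray–von Neumann equivalence. -/
def MvNEquiv {R : Type*} [Mul R] [Star R] (p q : R) : Prop :=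
  ∃ v : R, star v * v = p ∧ v * star v = q

/-- A properly infinite projection: two orthogonal subprojections each equivalent to `p`. -/
def IsProperlyInfinite {R : Type*} [Ring R] [StarRing R] (p : R) : Prop :=
  ∃ v w : R, star v * v = p ∧ star w * w = p ∧
    p * (v * star v) = v * star v ∧ p * (w * star w) = w * star w ∧
    (v * star v) * (w * star w) = 0

/-- A full element: contained in no proper closed two-sided ideal. -/
def IsFullElem {R : Type*} [Ring R] [TopologicalSpace R] (a : R) : Prop :=
  ∀ I : TwoSidedIdeal R, IsClosed (I : Set R) → a ∈ I → I = ⊤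

/-- `[u] = 0` in `K₁`: some stabilization `diag (u,1,…,1)` is connected to `1` in the unitary
group of a matrix algebra. -/
def K1Trivial {R : Type*} [Ring R] [StarRing R] [TopologicalSpace R] (u : R) : Prop :=
  ∃ n : ℕ, ∃ w : unitary (Matrix (Fin (n + 1)) (Fin (n + 1)) R),
    w.val
      = Matrix.diagonal (fun i => if i = 0 then u else 1) ∧
    Joined (1 : unitary (Matrix (Fin (n + 1)) (Fin (n + 1)) R)) w

/-- `K₁`-injectivity of a unital C*-algebra. -/
def K1Injective (R : Type*) [Ring R] [StarRing R] [TopologicalSpace R] : Prop :=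
  ∀ u : unitary R, K1Trivial (u : R) → Joined (1 : unitary R) u

/-- Homotopy of projections: a continuous path of projections from `p` to `q`. -/
def HomotopicProj {R : Type*} [Mul R] [Star R] [TopologicalSpace R] (p q : R) : Prop :=
  ∃ f : C(unitInterval, R), f 0 = p ∧ f 1 = q ∧ ∀ t, IsProjection (f t)

/-- Stabilized projection `diag (p, 1, …, 1, 0, …, 0)` (with `k+1` ones). -/
def stabProj {R : Type*} [Ring R] (p : R) (k n : ℕ) : Matrix (Fin (n + 1)) (Fin (n + 1)) R :=
  Matrix.diagonal (fun i => if i = 0 then p else if (i : ℕ) ≤ k + 1 then 1 else 0)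

/-- `[p] = [q]` in `K₀` of a unital ring, via stabilized Murray–von Neumann equivalence. -/
def K0Eq {R : Type*} [Ring R] [StarRing R] (p q : R) : Prop :=
  ∃ k n : ℕ, MvNEquiv (stabProj p k n) (stabProj q k n)

/-!
Since `p` is idempotent, `u - x = p u (1 - p) + (1 - p) u p = (u p - p u) (2 p - 1)`, and `2 p - 1`
is a self-adjoint unitary, so `‖u - x‖ = ‖u p - p u‖ < 1` and `x` is invertible. As `x` commutes
with the self-adjoint `p`, so do `x⋆x`, its functional calculus and `v`. From `x = v |x|` we get
`‖x - v‖ = ‖|x| - 1‖ ≤ 1`, because `0 ≤ |x| ≤ ‖x‖ ≤ 2`. Hence `‖u - v‖ < 2`, and unitaries at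
distance less than `2` are joined by a path of unitaries.
-/

def pinching {R : Type*} [Ring R] (p u : R) : R :=
  p * u * p + (1 - p) * u * (1 - p)

section Pinching

variable {R : Type*} [Ring R] {p : R}

lemma IsIdempotentElem.commute_pinching (hp : IsIdempotentElem p) (u : R) :
    Commute p (pinching p u) := by
  simp only [Commute, SemiconjBy, pinching, mul_add, add_mul, mul_sub, sub_mul, one_mul, mul_one,
    mul_assoc, hp.eq, hp.mul_self_mul]
  abel

lemma IsIdempotentElem.sub_pinching (hp : IsIdempotentElem p) (u : R) :
    u - pinching p u = (u * p - p * u) * (2 * p - 1) := by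
  simp only [pinching, mul_add, mul_sub, sub_mul, one_mul, mul_one, mul_assoc, hp.eq, two_mul]
  abel

lemma IsProjection.two_mul_sub_one_mem_unitary [StarRing R] (hp : IsProjection p) :
    2 * p - 1 ∈ unitary R := by
  have hs : IsSelfAdjoint (2 * p - 1) := by simp [IsSelfAdjoint, hp.1, two_mul]
  have hsq : (2 * p - 1) * (2 * p - 1) = 1 := by
    simp only [mul_sub, sub_mul, two_mul, mul_add, add_mul, hp.2, one_mul, mul_one]
    abel
  exact Unitary.mem_iff.mpr ⟨by rw [hs.star_eq, hsq], by rw [hs.star_eq, hsq]⟩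

end Pinching

section CStarRing

variable {A : Type*} [NormedRing A] [StarRing A] [CStarRing A]

lemma CStarRing.norm_coe_unitary_le_one (u : unitary A) : ‖(u : A)‖ ≤ 1 := by
  nontriviality A
  simp

lemma IsProjection.norm_sub_pinching {p : A} (hp : IsProjection p) (u : A) :
    ‖u - pinching p u‖ = ‖u * p - p * u‖ := by
  rw [IsIdempotentElem.sub_pinching hp.2,
    CStarRing.norm_mul_mem_unitary _ hp.two_mul_sub_one_mem_unitary]

lemma Unitary.isUnit_of_norm_sub_lt_one [CompleteSpace A] (u : unitary A) {x : A}
    (h : ‖(u : A) - x‖ < 1) : IsUnit x := by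
  have hsmall : ‖star (u : A) * ((u : A) - x)‖ < 1 := by
    simpa using (CStarRing.norm_coe_unitary_mul (star u) _).trans_lt h
  have hux : IsUnit (star (u : A) * x) := by
    simpa [mul_sub] using (Units.oneSub _ hsmall).isUnit
  simpa [← mul_assoc] using (Unitary.toUnits u).isUnit.mul hux

end CStarRing

section Polar

variable {A : Type*} [CStarAlgebra A] [PartialOrder A] [StarOrderedRing A]

lemma IsUnit.isStrictlyPositive_star_mul_self {x : A} (hx : IsUnit x) :
    IsStrictlyPositive (star x * x) :=
  IsStrictlyPositive.iff_of_unital.mpr ⟨star_mul_self_nonneg x, hx.star.mul hx⟩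

lemma IsStrictlyPositive.rpow_neg_half_mul_self_mul_rpow_neg_half {a : A}
    (ha : IsStrictlyPositive a) : a ^ (-(1 / 2 : ℝ)) * a * a ^ (-(1 / 2 : ℝ)) = 1 := by
  nth_rw 2 [← CFC.sqrt_mul_sqrt_self a]
  rw [CFC.sqrt_eq_rpow, ← mul_assoc, CFC.rpow_neg_mul_rpow, one_mul, CFC.rpow_mul_rpow_neg]

def polarUnitary (x : A) : A :=
  x * (star x * x) ^ (-(1 / 2 : ℝ))

lemma polarUnitary_mul_abs {x : A} (hx : IsUnit x) : polarUnitary x * CFC.abs x = x := by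
  have := hx.isStrictlyPositive_star_mul_self
  rw [polarUnitary, CFC.abs, CFC.sqrt_eq_rpow, mul_assoc, CFC.rpow_neg_mul_rpow, mul_one]

lemma polarUnitary_mem_unitary {x : A} (hx : IsUnit x) : polarUnitary x ∈ unitary A := by
  have ha := hx.isStrictlyPositive_star_mul_self
  have hb : star ((star x * x) ^ (-(1 / 2 : ℝ))) = (star x * x) ^ (-(1 / 2 : ℝ)) :=
    (IsSelfAdjoint.of_nonneg CFC.rpow_nonneg).star_eq
  have hleft : star (polarUnitary x) * polarUnitary x = 1 := by
    rw [polarUnitary, star_mul, hb, mul_assoc, ← mul_assoc (star x), ← mul_assoc]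
    exact ha.rpow_neg_half_mul_self_mul_rpow_neg_half
  have hv : IsUnit (polarUnitary x) := hx.mul (IsStrictlyPositive.rpow _ _ ha).isUnit
  refine Unitary.mem_iff.mpr ⟨hleft, ?_⟩
  rw [← hv.unit.inv_eq_of_mul_eq_one_left hleft]
  exact hv.mul_val_inv

lemma Commute.polarUnitary {p x : A} (hp : IsSelfAdjoint p) (h : Commute p x) :
    Commute p (polarUnitary x) := by
  have h' : Commute p (star x) := by simpa [hp.star_eq] using h.star_star
  exact h.mul_right ((h'.mul_right h).symm.cfc_nnreal _).symm

lemma norm_sub_one_le_one_of_nonneg {a : A} (ha : 0 ≤ a) (h : ‖a‖ ≤ 2) : ‖a - 1‖ ≤ 1 := by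
  have hcfc : a - 1 = cfc (fun t : ℝ => t - 1) a := by
    rw [cfc_sub _ _ a, cfc_id' ℝ a, cfc_const_one ℝ a]
  rw [hcfc]
  refine norm_cfc_le zero_le_one fun t ht => ?_
  have h0 : 0 ≤ t := spectrum_nonneg_of_nonneg ha ht
  have h2 : t ≤ 2 := (le_algebraMap_iff_spectrum_le (R := ℝ)).mp
    ((CStarAlgebra.norm_le_iff_le_algebraMap a zero_le_two ha).mp h) t ht
  rw [Real.norm_eq_abs, abs_le]
  constructor <;> linarith

lemma norm_sub_polarUnitary_le_one {x : A} (hx : IsUnit x) (h : ‖x‖ ≤ 2) :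
    ‖x - polarUnitary x‖ ≤ 1 := by
  have hxv : x - polarUnitary x = polarUnitary x * (CFC.abs x - 1) := by
    rw [mul_sub, polarUnitary_mul_abs hx, mul_one]
  rw [hxv, CStarRing.norm_mem_unitary_mul _ (polarUnitary_mem_unitary hx)]
  exact norm_sub_one_le_one_of_nonneg (CFC.abs_nonneg x) (CFC.norm_abs.trans_le h)

end Polar

/-- if `‖up - pu‖ < 1` then `x = pup + (1-p)u(1-p)` is invertible, and the unitary
`v = x (x*x)^{-1/2}` of its polar decomposition commutes with `p` and is homotopic to `u`. -/
theorem stmt1 {A : Type*} [CStarAlgebra A] (u : unitary A) (p : A)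
    (hp : IsProjection p) (h : ‖u.val * p - p * u.val‖ < 1) :
    let x := p * u.val * p + (1 - p) * u.val * (1 - p)
    IsUnit x ∧
    ∃ v : unitary A,
      v.val = x * cfc (fun t : ℝ => t ^ (-(1 / 2 : ℝ))) (star x * x) ∧
      v.val * p = p * v.val ∧ Joined u v := by
  intro x
  let _ : PartialOrder A := CStarAlgebra.spectralOrder A
  have : StarOrderedRing A := CStarAlgebra.spectralOrderedRing A
  have hux : ‖(u : A) - x‖ < 1 := (hp.norm_sub_pinching _).trans_lt h
  have hx : IsUnit x := Unitary.isUnit_of_norm_sub_lt_one u hux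
  have hx_le : ‖x‖ ≤ 2 := by
    linarith [norm_le_norm_add_norm_sub' x (u : A), norm_sub_rev x (u : A),
      CStarRing.norm_coe_unitary_le_one u]
  have hxv := norm_sub_polarUnitary_le_one hx hx_le
  refine ⟨hx, ⟨polarUnitary x, polarUnitary_mem_unitary hx⟩,
    congrArg (x * ·) (CFC.rpow_eq_cfc_real (star_mul_self_nonneg x)),
    ((IsIdempotentElem.commute_pinching hp.2 _).polarUnitary hp.1).eq.symm, Unitary.joined _ _ ?_⟩
  calc ‖polarUnitary x - u‖ ≤ ‖polarUnitary x - x‖ + ‖x - u‖ :=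
        norm_sub_le_norm_sub_add_norm_sub _ _ _
    _ < 2 := by linarith [norm_sub_rev (polarUnitary x) x, norm_sub_rev x (u : A)]
end
end

section
/- Let A be a unital C*-algebra, and let p and q be Murray–von Neumann equivalent properly infinite full projections in A. Suppose there is a properly infinite full projection r in A with r orthogonal to p and r orthogonal to q. Then p and q are homotopic, i.e., connected by a continuous path of projections in A. -/
/-!
Because `r` is properly infinite, the elements `a r b` are closed under addition and so form an
ideal; because `r` is full, the closure of that ideal contains `1`, hence so does the ideal (units
are open), i.e. `1 = a r b`. The polar part of the left invertible element `r b` is an isometry `x`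
with `r x = x`, so `p ∼ e := x p x⋆ ≤ r`, and `q ∼ e` as well. Now `p ⊥ e` and `q ⊥ e`, and a
partial isometry `v` from a projection `p` onto an orthogonal one is rotated into place by
`t ↦ yₜ yₜ⋆` with `yₜ = cos (πt/2) p + sin (πt/2) v`, a partial isometry with `yₜ⋆ yₜ = p`.
-/

noncomputable section

section StarSemigroup

variable {R : Type*} [Semigroup R] [StarMul R] {p q e : R}

theorem MvNEquiv.symm (h : MvNEquiv p q) : MvNEquiv q p := by
  obtain ⟨v, hv, hv'⟩ := h
  exact ⟨star v, by rwa [star_star], by rwa [star_star]⟩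

theorem MvNEquiv.trans (hp : IsProjection p) (he : IsProjection e) (hpq : MvNEquiv p q)
    (hqe : MvNEquiv q e) : MvNEquiv p e := by
  obtain ⟨v, hv, hv'⟩ := hpq
  obtain ⟨w, hw, hw'⟩ := hqe
  refine ⟨w * v, ?_, ?_⟩
  · calc star (w * v) * (w * v) = star v * (star w * w) * v := by simp only [star_mul, mul_assoc]
      _ = star v * v * (star v * v) := by rw [hw, ← hv']; simp only [mul_assoc]
      _ = p := by rw [hv, hp.2]
  · calc w * v * star (w * v) = w * (v * star v) * star w := by simp only [star_mul, mul_assoc]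
      _ = w * star w * (w * star w) := by rw [hv', ← hw]; simp only [mul_assoc]
      _ = e := by rw [hw', he.2]

end StarSemigroup

theorem mul_eq_zero_of_orthogonal_of_le {R : Type*} [NonUnitalRing R] [StarRing R] {p r e : R}
    (hp : IsProjection p) (hr : IsProjection r) (hrp : r * p = 0) (hre : r * e = e) :
    p * e = 0 := by
  have hpr : p * r = 0 := by simpa [hp.1, hr.1] using congrArg star hrp
  rw [← hre, ← mul_assoc, hpr, zero_mul]

section Homotopy

variable {R : Type*} [Mul R] [Star R] [TopologicalSpace R] {p q e : R}

theorem homotopicProj_iff_exists_path :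
    HomotopicProj p q ↔ ∃ γ : Path p q, ∀ t, IsProjection (γ t) :=
  ⟨fun ⟨f, h0, h1, hf⟩ => ⟨⟨f, h0, h1⟩, hf⟩, fun ⟨γ, hγ⟩ => ⟨γ, γ.source, γ.target, hγ⟩⟩

theorem HomotopicProj.symm (h : HomotopicProj p q) : HomotopicProj q p := by
  obtain ⟨γ, hγ⟩ := homotopicProj_iff_exists_path.1 h
  exact homotopicProj_iff_exists_path.2 ⟨γ.symm, fun t => hγ _⟩

theorem HomotopicProj.trans (hpq : HomotopicProj p q) (hqe : HomotopicProj q e) :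
    HomotopicProj p e := by
  obtain ⟨γ₁, hγ₁⟩ := homotopicProj_iff_exists_path.1 hpq
  obtain ⟨γ₂, hγ₂⟩ := homotopicProj_iff_exists_path.1 hqe
  refine homotopicProj_iff_exists_path.2 ⟨γ₁.trans γ₂, fun t => ?_⟩
  rw [Path.trans_apply]
  split_ifs
  exacts [hγ₁ _, hγ₂ _]

end Homotopy

section PartialIsometry

variable {A : Type*} [NonUnitalNormedRing A] [StarRing A] [CStarRing A] {v w e : A}

/-- By the C⋆-identity, since `(v (v⋆v) - v)⋆ (v (v⋆v) - v) = (v⋆v)³ - 2 (v⋆v)² + v⋆v = 0`. -/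
theorem mul_star_mul_self_of_isProjection (hv : IsProjection (star v * v)) :
    v * (star v * v) = v := by
  rw [← sub_eq_zero, ← CStarRing.star_mul_self_eq_zero_iff]
  have hexpand : star (v * (star v * v) - v) * (v * (star v * v) - v)
      = (star v * v) * (star v * v) * (star v * v)
        - (star v * v) * (star v * v) - (star v * v) * (star v * v) + star v * v := by
    simp only [star_sub, star_mul, star_star, mul_sub, sub_mul]
    noncomm_ring
  rw [hexpand, hv.2, hv.2]
  abel

theorem isProjection_mul_star_self (hv : IsProjection (star v * v)) :
    IsProjection (v * star v) :=
  ⟨by rw [star_mul, star_star], by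
    rw [← mul_assoc, mul_assoc v, mul_star_mul_self_of_isProjection hv]⟩

theorem mul_eq_self_of_mul_mul_star_self (hv : IsProjection (star v * v))
    (he : e * (v * star v) = v * star v) : e * v = v := by
  conv_lhs => rw [← mul_star_mul_self_of_isProjection hv, ← mul_assoc v, ← mul_assoc, he]
  rw [mul_assoc, mul_star_mul_self_of_isProjection hv]

theorem star_mul_eq_zero_of_orthogonal (hv : IsProjection (star v * v))
    (hw : IsProjection (star w * w)) (h : v * star v * (w * star w) = 0) : star v * w = 0 := by
  have hv' : star v * (v * star v) = star v := by
    simpa only [star_mul, star_star, mul_assoc] using congrArg star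
      (mul_star_mul_self_of_isProjection hv)
  calc star v * w = star v * (v * star v) * (w * star w * w) := by
        rw [hv', mul_assoc w, mul_star_mul_self_of_isProjection hw]
    _ = star v * (v * star v * (w * star w)) * w := by simp only [mul_assoc]
    _ = 0 := by rw [h, mul_zero, zero_mul]

end PartialIsometry

section Rotation

variable {A : Type*} [NormedRing A] [StarRing A] [CStarRing A] [NormedAlgebra ℝ A]
  [StarModule ℝ A] {p q v : A}

theorem star_mul_self_rotation (hp : IsProjection p) (hpq : p * q = 0) (hv : star v * v = p)
    (hv' : v * star v = q) {c s : ℝ} (hcs : c ^ 2 + s ^ 2 = 1) :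
    star (c • p + s • v) * (c • p + s • v) = p := by
  have hvp : v * p = v := hv ▸ mul_star_mul_self_of_isProjection (hv ▸ hp)
  have hpv : p * v = 0 := by
    calc p * v = p * (v * star v) * v := by rw [mul_assoc, mul_assoc v, hv, hvp]
      _ = 0 := by rw [hv', hpq, zero_mul]
  have hv'p : star v * p = 0 := by simpa [hp.1] using congrArg star hpv
  simp only [star_add, star_smul, star_trivial, hp.1, add_mul, mul_add, smul_mul_smul, hp.2,
    hpv, hv'p, hv, smul_zero, add_zero, zero_add, ← add_smul]
  rw [← sq, ← sq, hcs, one_smul]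

theorem homotopicProj_of_mvNEquiv_of_mul_eq_zero (hp : IsProjection p)
    (hpq : MvNEquiv p q) (horth : p * q = 0) : HomotopicProj p q := by
  obtain ⟨v, hv, hv'⟩ := hpq
  let y : ℝ → A := fun t => Real.cos (Real.pi / 2 * t) • p + Real.sin (Real.pi / 2 * t) • v
  have hy : ∀ t, star (y t) * y t = p := fun t =>
    star_mul_self_rotation hp horth hv hv' (Real.cos_sq_add_sin_sq _)
  refine ⟨⟨fun t => y t * star (y t), by fun_prop⟩, ?_, ?_, fun t =>
    isProjection_mul_star_self ((hy t).symm ▸ hp)⟩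
  · simp [y, hp.1, hp.2]
  · simp [y, hv']

end Rotation

def TwoSidedIdeal.closure {R : Type*} [Ring R] [TopologicalSpace R] [IsTopologicalRing R]
    (I : TwoSidedIdeal R) : TwoSidedIdeal R :=
  .mk' (_root_.closure I) (subset_closure I.zero_mem)
    (fun hx hy => map_mem_closure₂ continuous_add hx hy fun _ ha _ hb => I.add_mem ha hb)
    (fun hx => map_mem_closure continuous_neg hx fun _ ha => I.neg_mem ha)
    (fun {x _} hy => map_mem_closure (continuous_const_mul x) hy fun _ ha =>
      I.mul_mem_left _ _ ha)
    (fun {_ y} hx => map_mem_closure (f := (· * y)) (continuous_mul_const y) hx fun _ ha =>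
      I.mul_mem_right _ _ ha)

@[simp]
theorem TwoSidedIdeal.coe_closure {R : Type*} [Ring R] [TopologicalSpace R]
    [IsTopologicalRing R] (I : TwoSidedIdeal R) : (I.closure : Set R) = _root_.closure I :=
  TwoSidedIdeal.coe_mk' ..

section FullProjection

variable {A : Type*} [NormedRing A] [StarRing A] [CStarRing A] {r : A}

/-- Witness: `a = a₁ v⋆ + a₂ w⋆` and `b = v b₁ + w b₂`, with `v, w` the two isometries of `r`. -/
theorem IsProperlyInfinite.exists_mul_mul_eq_add (hr : IsProjection r)
    (hpi : IsProperlyInfinite r) (a₁ b₁ a₂ b₂ : A) :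
    ∃ a b, a * r * b = a₁ * r * b₁ + a₂ * r * b₂ := by
  obtain ⟨v, w, hv, hw, hvr, hwr, hvw⟩ := hpi
  have hv' : IsProjection (star v * v) := hv ▸ hr
  have hw' : IsProjection (star w * w) := hw ▸ hr
  have hrv : r * v = v := mul_eq_self_of_mul_mul_star_self hv' hvr
  have hrw : r * w = w := mul_eq_self_of_mul_mul_star_self hw' hwr
  have hv'w : star v * w = 0 := star_mul_eq_zero_of_orthogonal hv' hw' hvw
  have hw'v : star w * v = 0 := by simpa using congrArg star hv'w
  refine ⟨a₁ * star v + a₂ * star w, v * b₁ + w * b₂, ?_⟩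
  calc (a₁ * star v + a₂ * star w) * r * (v * b₁ + w * b₂)
      = a₁ * (star v * (r * v)) * b₁ + a₁ * (star v * (r * w)) * b₂
        + a₂ * (star w * (r * v)) * b₁ + a₂ * (star w * (r * w)) * b₂ := by noncomm_ring
    _ = a₁ * r * b₁ + a₂ * r * b₂ := by
      rw [hrv, hrw, hv, hw, hv'w, hw'v, mul_zero, zero_mul, mul_zero, zero_mul, add_zero,
        add_zero]

def IsProperlyInfinite.ideal (hr : IsProjection r) (hpi : IsProperlyInfinite r) :
    TwoSidedIdeal A :=
  .mk' {z | ∃ a b, a * r * b = z} ⟨0, 0, by simp only [zero_mul]⟩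
    (by
      rintro _ _ ⟨a₁, b₁, rfl⟩ ⟨a₂, b₂, rfl⟩
      exact hpi.exists_mul_mul_eq_add hr a₁ b₁ a₂ b₂)
    (by
      rintro _ ⟨a, b, rfl⟩
      exact ⟨-a, b, by noncomm_ring⟩)
    (by
      rintro x _ ⟨a, b, rfl⟩
      exact ⟨x * a, b, by simp only [mul_assoc]⟩)
    (by
      rintro _ y ⟨a, b, rfl⟩
      exact ⟨a, b * y, by simp only [mul_assoc]⟩)

@[simp]
theorem IsProperlyInfinite.coe_ideal (hr : IsProjection r) (hpi : IsProperlyInfinite r) :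
    (hpi.ideal hr : Set A) = {z | ∃ a b, a * r * b = z} :=
  TwoSidedIdeal.coe_mk' ..

theorem IsFullElem.exists_mul_mul_eq_one [HasSummableGeomSeries A] (hr : IsProjection r)
    (hpi : IsProperlyInfinite r) (hf : IsFullElem r) : ∃ a b : A, a * r * b = 1 := by
  have hJ : ((hpi.ideal hr).closure : Set A) = closure {z | ∃ a b, a * r * b = z} := by simp
  have hrJ : r ∈ (hpi.ideal hr).closure := by
    rw [← SetLike.mem_coe, hJ]
    exact subset_closure ⟨1, 1, by rw [one_mul, mul_one]⟩
  have h1 : (1 : A) ∈ closure {z | ∃ a b, a * r * b = z} := by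
    rw [← hJ, hf _ (hJ ▸ isClosed_closure) hrJ]
    trivial
  obtain ⟨_, ⟨a, b, rfl⟩, hdist⟩ := Metric.mem_closure_iff.1 h1 1 one_pos
  rw [dist_eq_norm] at hdist
  let u := Units.oneSub _ hdist
  refine ⟨↑u⁻¹ * a, b, ?_⟩
  have hu : (u : A) = a * r * b := by simp [u, Units.oneSub]
  rw [mul_assoc, mul_assoc, ← mul_assoc a, ← hu, u.inv_mul]

end FullProjection

section Isometry

variable {A : Type*} [CStarAlgebra A]

/-- `1 = t⋆ (a⋆a) t ≤ ‖a⋆a‖ t⋆t`, so `t⋆t` is invertible and `t (t⋆t)^(-1/2)` is an isometry. -/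
theorem exists_isometry_of_mul_eq_one {a t : A} (h : a * t = 1) :
    ∃ c : A, star (t * c) * (t * c) = 1 := by
  nontriviality A
  let : PartialOrder A := CStarAlgebra.spectralOrder A
  have : StarOrderedRing A := CStarAlgebra.spectralOrderedRing A
  have hle : (1 : A) ≤ ‖star a * a‖ • (star t * t) := calc
    (1 : A) = star (a * t) * (a * t) := by rw [h, star_one, one_mul]
    _ = star t * (star a * a) * t := by simp only [star_mul, mul_assoc]
    _ ≤ star t * algebraMap ℝ A ‖star a * a‖ * t :=
      star_left_conjugate_le_conjugate (IsSelfAdjoint.star_mul_self a).le_algebraMap_norm_self t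
    _ = ‖star a * a‖ • (star t * t) := by
      rw [Algebra.algebraMap_eq_smul_one, mul_smul_comm, smul_mul_assoc, mul_one]
  have hs : IsStrictlyPositive (‖star a * a‖ • (star t * t)) := isStrictlyPositive_one.of_le hle
  have hc : ‖star a * a‖ ≠ 0 := fun h0 => by
    rw [h0, zero_smul] at hs
    exact not_isUnit_zero hs.isUnit
  have hpos : IsStrictlyPositive (star t * t) := by
    simpa only [inv_smul_smul₀ hc] using hs.smul (inv_pos.2 ((norm_nonneg _).lt_of_ne' hc))
  set c := (star t * t) ^ (-(1 / 2) : ℝ)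
  have hcsa : star c = c := (IsSelfAdjoint.of_nonneg CFC.rpow_nonneg).star_eq
  refine ⟨c, ?_⟩
  calc star (t * c) * (t * c) = c * (star t * t) * c := by
        rw [star_mul, hcsa]; simp only [mul_assoc]
    _ = 1 := CFC.conjugate_rpow_neg_one_half _ hpos

theorem IsFullElem.exists_isometry_mul_eq_self {r : A} (hr : IsProjection r)
    (hpi : IsProperlyInfinite r) (hf : IsFullElem r) : ∃ x : A, star x * x = 1 ∧ r * x = x := by
  obtain ⟨a, b, hab⟩ := hf.exists_mul_mul_eq_one hr hpi
  obtain ⟨c, hc⟩ := exists_isometry_of_mul_eq_one (t := r * b) (by rw [← mul_assoc, hab])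
  exact ⟨r * b * c, hc, by rw [← mul_assoc, ← mul_assoc, hr.2]⟩

theorem IsFullElem.exists_mvNEquiv_mul_eq_self {r p : A} (hr : IsProjection r)
    (hpi : IsProperlyInfinite r) (hf : IsFullElem r) (hp : IsProjection p) :
    ∃ e : A, IsProjection e ∧ MvNEquiv p e ∧ r * e = e := by
  obtain ⟨x, hx, hrx⟩ := hf.exists_isometry_mul_eq_self hr hpi
  have hxp : star (x * p) * (x * p) = p := by
    rw [star_mul, hp.1, mul_assoc, ← mul_assoc (star x), hx, one_mul, hp.2]
  refine ⟨x * p * star (x * p), isProjection_mul_star_self (by rwa [hxp]), ⟨x * p, hxp, rfl⟩, ?_⟩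
  simp only [← mul_assoc, hrx]

end Isometry

theorem stmt6_general {A : Type*} [CStarAlgebra A] (p q r : A)
    (hp : IsProjection p) (hq : IsProjection q) (hr : IsProjection r)
    (hrpi : IsProperlyInfinite r) (hrf : IsFullElem r)
    (hpq : MvNEquiv p q) (hrp : r * p = 0) (hrq : r * q = 0) :
    HomotopicProj p q := by
  obtain ⟨e, he, hpe, hre⟩ := hrf.exists_mvNEquiv_mul_eq_self hr hrpi hp
  have hqe : MvNEquiv q e := hpq.symm.trans hq he hpe
  exact (homotopicProj_of_mvNEquiv_of_mul_eq_zero hp hpe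
    (mul_eq_zero_of_orthogonal_of_le hp hr hrp hre)).trans
    (homotopicProj_of_mvNEquiv_of_mul_eq_zero hq hqe
      (mul_eq_zero_of_orthogonal_of_le hq hr hrq hre)).symm

/-- equivalent properly infinite full projections `p ∼ q` which are both orthogonal
to some properly infinite full projection `r` are homotopic. -/
theorem stmt6 {A : Type*} [CStarAlgebra A] (p q r : A)
    (hp : IsProjection p) (hq : IsProjection q) (hr : IsProjection r)
    (hppi : IsProperlyInfinite p) (hpf : IsFullElem p)
    (hqpi : IsProperlyInfinite q) (hqf : IsFullElem q)
    (hrpi : IsProperlyInfinite r) (hrf : IsFullElem r)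
    (hpq : MvNEquiv p q) (hrp : r * p = 0) (hrq : r * q = 0) :
    HomotopicProj p q :=
  stmt6_general p q r hp hq hr hrpi hrf hpq hrp hrq
end
end

section
/- Let A be a unital C*-algebra that is the pull-back of two unital properly infinite C*-algebras A₁ and A₂ along surjective unital *-homomorphisms π₁ : A₁ → B and π₂ : A₂ → B. If B is K₁-injective, then A is properly infinite. -/
noncomputable section

/-!
Let `s₀, s₁ ∈ A₁` and `t₀, t₁ ∈ A₂` be isometries with orthogonal ranges. In `B` the triples
`π₁(s₀s₀), π₁(s₀s₁), π₁(s₁)` and `π₂(t₀t₀), π₂(t₀t₁), π₂(t₁)` again consist of isometries with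
orthogonal ranges, and the spare third members leave enough room to write down a unitary `u₀` with
`u₀ π₂(t₀tᵢ) = π₁(s₀sᵢ)`. With `d = π₂(t₁)`, the unitary `θ = d u₀* d* + (1 - dd*)` fixes
`π₂(t₀tᵢ)`, so `u = u₀θ` still intertwines the two pairs, and `[u] = 0` in `K₁(B)`: conjugating by
symmetries of `M₂(B)`, which are homotopic to `1`, turns `diag(θ, 1)` into `diag(u₀*, 1)`.
By `K₁`-injectivity `u` lies in the identity component of `U(B)`, so it is a product of
exponentials and lifts to a unitary `V ∈ A₂`. The pairs `(s₀sᵢ, V t₀tᵢ)` then define two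
isometries with orthogonal ranges in the pull-back.
-/

lemma mul_mul_cancel_left_of_mul_eq_one {M : Type*} [Monoid M] {a b : M} (h : a * b = 1)
    (c : M) : a * (b * c) = c := by
  rw [← mul_assoc, h, one_mul]

def IsCuntzToeplitzFamily {R ι : Type*} [Mul R] [Star R] [Zero R] [One R] [DecidableEq ι]
    (v : ι → R) : Prop :=
  ∀ i j, star (v i) * v j = if i = j then 1 else 0

namespace IsCuntzToeplitzFamily

variable {R ι : Type*} [Ring R] [StarRing R] [DecidableEq ι] {v : ι → R}

lemma star_mul_mul (hv : IsCuntzToeplitzFamily v) (i j : ι) (y : R) :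
    star (v i) * (v j * y) = if i = j then y else 0 := by
  rw [← mul_assoc, hv i j]
  split_ifs <;> simp

lemma comp_injective {κ : Type*} [DecidableEq κ] (hv : IsCuntzToeplitzFamily v) {f : κ → ι}
    (hf : Function.Injective f) : IsCuntzToeplitzFamily (v ∘ f) := by
  intro i j
  simp [hv (f i) (f j), hf.eq_iff]

lemma isometry_mul (hv : IsCuntzToeplitzFamily v) {u : R} (hu : star u * u = 1) :
    IsCuntzToeplitzFamily fun i => u * v i := by
  intro i j
  rw [star_mul, mul_assoc, mul_mul_cancel_left_of_mul_eq_one hu, hv]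

lemma map {S F : Type*} [Ring S] [StarRing S] [FunLike F R S] [RingHomClass F R S]
    [StarHomClass F R S] (hv : IsCuntzToeplitzFamily v) (f : F) :
    IsCuntzToeplitzFamily fun i => f (v i) := by
  intro i j
  rw [← map_star, ← map_mul, hv]
  split_ifs <;> simp

lemma refine {v : Fin 2 → R} (hv : IsCuntzToeplitzFamily v) :
    IsCuntzToeplitzFamily ![v 0 * v 0, v 0 * v 1, v 1] := by
  intro i j
  fin_cases i <;> fin_cases j <;>
    simp [star_mul, mul_assoc, hv.star_mul_mul, hv 1 0, hv 0 0, hv 1 1, hv 0 1]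

end IsCuntzToeplitzFamily

section Algebra

variable {R : Type*} [Ring R] [StarRing R]

lemma isProperlyInfinite_one_iff :
    IsProperlyInfinite (1 : R) ↔ ∃ v : Fin 2 → R, IsCuntzToeplitzFamily v := by
  constructor
  · rintro ⟨v, w, hv, hw, -, -, hvw⟩
    have hvw' : star v * w = 0 := calc
      star v * w = star v * (v * star v) * (w * star w) * w := by
        rw [← mul_assoc (star v) v, hv, one_mul, mul_assoc (star v), mul_assoc w, hw, mul_one]
      _ = 0 := by rw [mul_assoc (star v), hvw, mul_zero, zero_mul]
    refine ⟨![v, w], fun i j => ?_⟩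
    fin_cases i <;> fin_cases j <;> simp [hv, hw, hvw']
    rw [← star_star v, ← star_mul, hvw', star_zero]
  · rintro ⟨v, hv⟩
    refine ⟨v 0, v 1, by simpa using hv 0 0, by simpa using hv 1 1, one_mul _, one_mul _, ?_⟩
    rw [mul_assoc, ← mul_assoc (star (v 0)), hv 0 1]
    simp

/-- `u` extends the partial isometry `s₀t₀* + s₁t₁*` by a partial isometry from
`1 - t₀t₀* - t₁t₁*` onto `1 - s₀s₀* - s₁s₁*`, for which the spare isometries `s₂`, `t₂` make
room. -/
lemma exists_unitary_mul_eq {s t : Fin 3 → R} (hs : IsCuntzToeplitzFamily s)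
    (ht : IsCuntzToeplitzFamily t) :
    ∃ u ∈ unitary R, ∀ i : Fin 2, u * t i.castSucc = s i.castSucc := by
  refine ⟨s 0 * star (t 0) + s 1 * star (t 1)
    + s 2 * ((1 - t 0 * star (t 0) - t 1 * star (t 1) - t 2 * star (t 2))
        + (t 2 * star (s 2) + t 0 * star (s 0) + t 1 * star (s 1)) * star (t 2))
    + (1 - s 0 * star (s 0) - s 1 * star (s 1) - s 2 * star (s 2)) * star (t 2),
    Unitary.mem_iff.2 ⟨?_, ?_⟩, Fin.forall_fin_two.2 ⟨?_, ?_⟩⟩ <;>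
  · simp only [star_add, star_sub, star_mul, star_star, mul_add, add_mul, mul_sub,
      sub_mul, mul_one, one_mul, mul_assoc, hs _ _, ht _ _, hs.star_mul_mul, ht.star_mul_mul,
      Fin.isValue, Fin.reduceEq, if_true, if_false, Fin.castSucc_zero, Fin.castSucc_one,
      mul_zero, add_zero, zero_add, sub_zero]
    abel

def cornerUnitary (d x : R) : R := d * x * star d + (1 - d * star d)

lemma cornerUnitary_mul_of_star_mul_eq_zero {d : R} (x : R) {y : R} (hy : star d * y = 0) :
    cornerUnitary d x * y = y := by
  simp only [cornerUnitary, add_mul, sub_mul, one_mul, mul_assoc, hy, mul_zero, sub_zero, zero_add]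

lemma cornerUnitary_mem_unitary {d x : R} (hd : star d * d = 1) (hx : x ∈ unitary R) :
    cornerUnitary d x ∈ unitary R := by
  obtain ⟨hx₁, hx₂⟩ := Unitary.mem_iff.1 hx
  rw [Unitary.mem_iff]
  constructor <;>
  · simp only [cornerUnitary, star_add, star_sub, star_mul, star_one, star_star, mul_add, add_mul,
      mul_sub, sub_mul, mul_one, one_mul, mul_assoc, mul_mul_cancel_left_of_mul_eq_one hd,
      mul_mul_cancel_left_of_mul_eq_one hx₁, mul_mul_cancel_left_of_mul_eq_one hx₂]
    abel

end Algebra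

section TwoByTwo

open Matrix

variable {R : Type*} [Ring R]

lemma swap_conj_diag (a b : R) :
    !![0, 1; 1, 0] * !![a, 0; 0, b] * !![0, 1; 1, 0] = !![b, 0; 0, a] := by
  simp

variable [StarRing R]

lemma star_fin_two (a b c d : R) :
    star !![a, b; c, d] = !![star a, star c; star b, star d] := by
  ext i j
  fin_cases i <;> fin_cases j <;> simp [star_apply]

lemma diag_mem_unitary {a b : R} (ha : a ∈ unitary R) (hb : b ∈ unitary R) :
    !![a, 0; 0, b] ∈ unitary (Matrix (Fin 2) (Fin 2) R) := by
  rw [Unitary.mem_iff] at ha hb ⊢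
  simp [star_fin_two, ha, hb, one_fin_two]

def diagUnitary (x y : unitary R) : unitary (Matrix (Fin 2) (Fin 2) R) :=
  ⟨!![(x : R), 0; 0, y], diag_mem_unitary x.2 y.2⟩

lemma diagUnitary_mul (x y x' y' : unitary R) :
    diagUnitary x y * diagUnitary x' y' = diagUnitary (x * x') (y * y') :=
  Subtype.ext (by simp [diagUnitary])

lemma diagUnitary_one : diagUnitary (1 : unitary R) 1 = 1 :=
  Subtype.ext (by simp [diagUnitary, one_fin_two])

lemma swap_mem_unitary : !![0, 1; 1, 0] ∈ unitary (Matrix (Fin 2) (Fin 2) R) := by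
  simp [Unitary.mem_iff, star_fin_two, one_fin_two]

lemma isSelfAdjoint_swap : IsSelfAdjoint (!![0, 1; 1, 0] : Matrix (Fin 2) (Fin 2) R) := by
  simp [IsSelfAdjoint, star_fin_two]

def isometrySymmetry (d : R) : Matrix (Fin 2) (Fin 2) R := !![0, star d; d, 1 - d * star d]

lemma isSelfAdjoint_isometrySymmetry (d : R) : IsSelfAdjoint (isometrySymmetry d) := by
  simp [IsSelfAdjoint, isometrySymmetry, star_fin_two]

variable {d : R} (hd : star d * d = 1)
include hd

lemma isometrySymmetry_mem_unitary :
    isometrySymmetry d ∈ unitary (Matrix (Fin 2) (Fin 2) R) := by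
  rw [Unitary.mem_iff, (isSelfAdjoint_isometrySymmetry d).star_eq, and_self]
  simp [isometrySymmetry, one_fin_two, mul_sub, sub_mul, mul_assoc, hd,
    mul_mul_cancel_left_of_mul_eq_one hd]

lemma isometrySymmetry_conj (a : R) :
    isometrySymmetry d * !![a, 0; 0, 1] * isometrySymmetry d = !![1, 0; 0, cornerUnitary d a] := by
  simp [isometrySymmetry, cornerUnitary, mul_sub, sub_mul, mul_assoc, hd,
    mul_mul_cancel_left_of_mul_eq_one hd]

end TwoByTwo

section Symmetry

variable {M : Type*} [Ring M] [Algebra ℂ M]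

lemma smul_one_add_smul_mul_smul_one_add_smul {J : M} (hJJ : J * J = 1) (a b c d : ℂ) :
    (a • 1 + b • J) * (c • 1 + d • J) = (a * c + b * d) • 1 + (a * d + b * c) • J := by
  simp only [add_mul, mul_add, smul_mul_smul_comm, one_mul, mul_one, hJJ, add_smul]
  abel

variable [StarRing M] [StarModule ℂ M]

lemma smul_one_add_smul_mem_unitary {J : M} (hJ : IsSelfAdjoint J) (hJJ : J * J = 1) {a b : ℂ}
    (hab : star a * a + star b * b = 1) (hab' : star a * b + star b * a = 0) :
    a • 1 + b • J ∈ unitary M := by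
  have hstar : star (a • 1 + b • J) = star a • 1 + star b • J := by
    rw [star_add, star_smul, star_smul, star_one, hJ.star_eq]
  rw [Unitary.mem_iff, hstar, smul_one_add_smul_mul_smul_one_add_smul hJJ,
    smul_one_add_smul_mul_smul_one_add_smul hJJ, hab, hab',
    show a * star a + b * star b = 1 by linear_combination hab,
    show a * star b + b * star a = 0 by linear_combination hab']
  simp

lemma smul_one_add_smul_mem_unitary_of_circle {J : M} (hJ : IsSelfAdjoint J) (hJJ : J * J = 1)
    (z : Circle) :
    ((1 + z) / 2 : ℂ) • (1 : M) + ((1 - z) / 2 : ℂ) • J ∈ unitary M := by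
  have hz : star (z : ℂ) * z = 1 := by
    rw [Complex.star_def, ← Circle.coe_inv_eq_conj, ← Circle.coe_mul, inv_mul_cancel,
      Circle.coe_one]
  refine smul_one_add_smul_mem_unitary hJ hJJ ?_ ?_ <;>
    simp only [star_div₀, star_add, star_sub, star_one, star_ofNat]
  · linear_combination (2⁻¹ : ℂ) * hz
  · linear_combination -(2⁻¹ : ℂ) * hz

variable [TopologicalSpace M] [ContinuousAdd M] [ContinuousSMul ℂ M]

lemma joined_one_of_isSelfAdjoint (J : unitary M) (hJ : IsSelfAdjoint (J : M)) :
    Joined 1 J := by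
  have hJJ : (J : M) * J = 1 := by simpa [hJ.star_eq] using J.2.1
  let f : Circle → unitary M := fun z =>
    ⟨((1 + z) / 2 : ℂ) • (1 : M) + ((1 - z) / 2 : ℂ) • J,
      smul_one_add_smul_mem_unitary_of_circle hJ hJJ z⟩
  have hf : Continuous f := by fun_prop
  have h1 : f 1 = 1 := by ext; simp [f]
  have h2 : f (-1) = J := by ext; simp [f]
  simpa [h1, h2] using (PathConnectedSpace.joined (1 : Circle) (-1)).map hf

end Symmetry

lemma Joined.conj {G : Type*} [Group G] [TopologicalSpace G] [IsTopologicalGroup G] {g : G}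
    (hg : Joined 1 g) (a : G) : Joined a (g * a * g⁻¹) := by
  simpa using (hg.mul (Joined.refl a)).mul hg.inv

section K1

variable {R : Type*} [Ring R] [StarRing R] [Algebra ℂ R] [StarModule ℂ R] [TopologicalSpace R]
  [IsTopologicalRing R] [ContinuousStar R] [ContinuousSMul ℂ R]

lemma joined_diagUnitary_swap (x y : unitary R) :
    Joined (diagUnitary x y) (diagUnitary y x) := by
  let S : unitary (Matrix (Fin 2) (Fin 2) R) := ⟨!![0, 1; 1, 0], swap_mem_unitary⟩
  have hS : S * diagUnitary x y * S⁻¹ = diagUnitary y x := Subtype.ext <| by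
    rw [← Unitary.star_eq_inv, Submonoid.coe_mul, Submonoid.coe_mul, Unitary.coe_star,
      isSelfAdjoint_swap.star_eq]
    exact swap_conj_diag _ _
  exact hS ▸ (joined_one_of_isSelfAdjoint S isSelfAdjoint_swap).conj (diagUnitary x y)

lemma joined_diagUnitary_cornerUnitary {d : R} (hd : star d * d = 1) (x : unitary R) :
    Joined (diagUnitary x 1)
      (diagUnitary 1 ⟨cornerUnitary d x, cornerUnitary_mem_unitary hd x.2⟩) := by
  let K : unitary (Matrix (Fin 2) (Fin 2) R) :=
    ⟨isometrySymmetry d, isometrySymmetry_mem_unitary hd⟩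
  have hK : K * diagUnitary x 1 * K⁻¹ = diagUnitary 1 ⟨_, cornerUnitary_mem_unitary hd x.2⟩ :=
    Subtype.ext <| by
      rw [← Unitary.star_eq_inv, Submonoid.coe_mul, Submonoid.coe_mul, Unitary.coe_star,
        (isSelfAdjoint_isometrySymmetry d).star_eq]
      exact isometrySymmetry_conj hd _
  exact hK ▸ (joined_one_of_isSelfAdjoint K (isSelfAdjoint_isometrySymmetry d)).conj _

lemma k1Trivial_mul_cornerUnitary_star {d : R} (hd : star d * d = 1) (x : unitary R) :
    K1Trivial ((x : R) * cornerUnitary d (star x)) := by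
  have hθ := cornerUnitary_mem_unitary hd (star x).2
  refine ⟨1, diagUnitary (x * ⟨_, hθ⟩) 1, ?_, ?_⟩
  · ext i j
    fin_cases i <;> fin_cases j <;> simp [diagUnitary]
  have h := (joined_diagUnitary_cornerUnitary hd (star x)).trans (joined_diagUnitary_swap _ _)
  simpa [diagUnitary_mul, diagUnitary_one] using (Joined.refl (diagUnitary x 1)).mul h

lemma exists_unitary_k1Trivial_mul_eq {s t : Fin 3 → R} (hs : IsCuntzToeplitzFamily s)
    (ht : IsCuntzToeplitzFamily t) :
    ∃ u : unitary R, K1Trivial (u : R) ∧ ∀ i : Fin 2, u * t i.castSucc = s i.castSucc := by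
  obtain ⟨u₀, hu₀, hu₀t⟩ := exists_unitary_mul_eq hs ht
  have hd : star (t 2) * t 2 = 1 := by simpa using ht 2 2
  refine ⟨⟨u₀, hu₀⟩ * ⟨_, cornerUnitary_mem_unitary hd (Unitary.star_mem hu₀)⟩,
    k1Trivial_mul_cornerUnitary_star hd ⟨u₀, hu₀⟩, fun i => ?_⟩
  have hdt : star (t 2) * t i.castSucc = 0 := (ht 2 _).trans (if_neg (by fin_cases i <;> decide))
  rw [Submonoid.coe_mul, mul_assoc, cornerUnitary_mul_of_star_mul_eq_zero _ hdt, hu₀t]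

end K1

section Lift

open Complex ComplexStarModule selfAdjoint
open scoped CStarAlgebra

variable {A B : Type*} [CStarAlgebra A] [CStarAlgebra B]

lemma exists_selfAdjoint_lift (π : A →⋆ₐ[ℂ] B) (hπ : Function.Surjective π)
    (x : selfAdjoint B) : ∃ y : selfAdjoint A, π y = x := by
  obtain ⟨a, ha⟩ := hπ x
  exact ⟨ℜ a, by rw [map_realPart, ha, selfAdjoint.realPart_coe]⟩

lemma map_expUnitary (π : A →⋆ₐ[ℂ] B) (y : selfAdjoint A) :
    π (expUnitary y) = expUnitary ⟨π y, y.2.map π⟩ := by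
  let +nondep : NormedAlgebra ℚ A := .restrictScalars ℚ ℂ A
  let +nondep : NormedAlgebra ℚ B := .restrictScalars ℚ ℂ B
  simp [NormedSpace.map_exp π (map_continuous π)]

lemma exists_unitary_lift_of_joined_one (π : A →⋆ₐ[ℂ] B) (hπ : Function.Surjective π)
    {u : unitary B} (hu : Joined 1 u) : ∃ v : unitary A, π v = u := by
  obtain ⟨l, rfl⟩ := Unitary.mem_pathComponentOne_iff.1 hu
  induction l with
  | nil => exact ⟨1, by simp⟩
  | cons x l ih =>
    obtain ⟨v, hv⟩ := ih (Unitary.mem_pathComponentOne_iff.2 ⟨l, rfl⟩)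
    obtain ⟨y, hy⟩ := exists_selfAdjoint_lift π hπ x
    refine ⟨expUnitary y * v, ?_⟩
    have hxy : (⟨π y, y.2.map π⟩ : selfAdjoint B) = x := Subtype.ext hy
    rw [List.map_cons, List.prod_cons, Submonoid.coe_mul, Submonoid.coe_mul, map_mul, hv,
      map_expUnitary, hxy]

end Lift

lemma exists_isCuntzToeplitzFamily_of_pullback {𝕜 A A₁ A₂ B ι : Type*} [CommSemiring 𝕜]
    [Ring A] [StarRing A] [Algebra 𝕜 A] [Ring A₁] [StarRing A₁] [Algebra 𝕜 A₁]
    [Ring A₂] [StarRing A₂] [Algebra 𝕜 A₂] [Ring B] [StarRing B] [Algebra 𝕜 B] [DecidableEq ι]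
    (φ₁ : A →⋆ₐ[𝕜] A₁) (φ₂ : A →⋆ₐ[𝕜] A₂) (π₁ : A₁ →⋆ₐ[𝕜] B) (π₂ : A₂ →⋆ₐ[𝕜] B)
    (hpb : ∀ a₁ a₂, π₁ a₁ = π₂ a₂ → ∃! a : A, φ₁ a = a₁ ∧ φ₂ a = a₂)
    {v₁ : ι → A₁} {v₂ : ι → A₂} (h₁ : IsCuntzToeplitzFamily v₁) (h₂ : IsCuntzToeplitzFamily v₂)
    (h : ∀ i, π₁ (v₁ i) = π₂ (v₂ i)) : ∃ v : ι → A, IsCuntzToeplitzFamily v := by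
  choose v hv using fun i => (hpb _ _ (h i)).exists
  refine ⟨v, fun i j => (hpb (if i = j then 1 else 0) (if i = j then 1 else 0) ?_).unique ?_ ?_⟩
  · split_ifs <;> simp
  · simp only [map_mul, map_star, (hv i).1, (hv i).2, (hv j).1, (hv j).2, h₁ i j, h₂ i j,
      and_self]
  · split_ifs <;> simp

theorem stmt7_general {A A₁ A₂ B : Type*}
    [CStarAlgebra A] [CStarAlgebra A₁] [CStarAlgebra A₂] [CStarAlgebra B]
    (φ₁ : A →⋆ₐ[ℂ] A₁) (φ₂ : A →⋆ₐ[ℂ] A₂) (π₁ : A₁ →⋆ₐ[ℂ] B) (π₂ : A₂ →⋆ₐ[ℂ] B)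
    (hπ₂ : Function.Surjective π₂)
    (hpb : ∀ a₁ a₂, π₁ a₁ = π₂ a₂ → ∃! a : A, φ₁ a = a₁ ∧ φ₂ a = a₂)
    (h₁ : IsProperlyInfinite (1 : A₁)) (h₂ : IsProperlyInfinite (1 : A₂))
    (hB : K1Injective B) :
    IsProperlyInfinite (1 : A) := by
  obtain ⟨s, hs⟩ := isProperlyInfinite_one_iff.1 h₁
  obtain ⟨t, ht⟩ := isProperlyInfinite_one_iff.1 h₂
  obtain ⟨u, hu, hut⟩ := exists_unitary_k1Trivial_mul_eq (hs.refine.map π₁) (ht.refine.map π₂)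
  obtain ⟨V, hV⟩ := exists_unitary_lift_of_joined_one π₂ hπ₂ (hB u hu)
  refine isProperlyInfinite_one_iff.2 <| exists_isCuntzToeplitzFamily_of_pullback φ₁ φ₂ π₁ π₂ hpb
    (hs.refine.comp_injective (Fin.castSucc_injective 2))
    ((ht.refine.comp_injective (Fin.castSucc_injective 2)).isometry_mul
      (Unitary.star_mul_self_of_mem V.2)) fun i => ?_
  simp only [Function.comp_apply, map_mul, hV, hut]

/-- a pull-back of two unital properly infinite C*-algebras over a
`K₁`-injective quotient is properly infinite. -/
theorem stmt7 {A A₁ A₂ B : Type*}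
    [CStarAlgebra A] [CStarAlgebra A₁] [CStarAlgebra A₂] [CStarAlgebra B]
    (φ₁ : A →⋆ₐ[ℂ] A₁) (φ₂ : A →⋆ₐ[ℂ] A₂) (π₁ : A₁ →⋆ₐ[ℂ] B) (π₂ : A₂ →⋆ₐ[ℂ] B)
    (hπ₁ : Function.Surjective π₁) (hπ₂ : Function.Surjective π₂)
    (hcomp : ∀ a : A, π₁ (φ₁ a) = π₂ (φ₂ a))
    (hpb : ∀ a₁ a₂, π₁ a₁ = π₂ a₂ → ∃! a : A, φ₁ a = a₁ ∧ φ₂ a = a₂)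
    (h₁ : IsProperlyInfinite (1 : A₁)) (h₂ : IsProperlyInfinite (1 : A₂))
    (hB : K1Injective B) :
    IsProperlyInfinite (1 : A) :=
  stmt7_general φ₁ φ₂ π₁ π₂ hπ₂ hpb h₁ h₂ hB
end
end

section
/- Let A be a unital C*-algebra that is the pull-back of two unital properly infinite C*-algebras A₁ and A₂ along surjective unital *-homomorphisms π₁ : A₁ → B and π₂ : A₂ → B. Then the matrix algebra M₂(A) is properly infinite. -/
noncomputable section

private lemma star_mul_orth' {D : Type*} [Ring D] [StarRing D] {a b : D}
    (ha : star a * a = 1) (hb : star b * b = 1)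
    (hab : (a * star a) * (b * star b) = 0) : star a * b = 0 := by
  calc star a * b = (star a * a) * (star a * b) * (star b * b) := by
        rw [ha, hb, one_mul, mul_one]
    _ = star a * ((a * star a) * (b * star b)) * b := by
        simp only [mul_assoc]
    _ = 0 := by rw [hab, mul_zero, zero_mul]

private lemma matrix_pair_key' {D : Type*} [Ring D] [StarRing D]
    (g : Fin 2 → D) (σ : Fin 2 → Fin 2 → D)
    (hg : star (g 0) * g 0 + star (g 1) * g 1 = 1)
    (hσ : ∀ a b a' b' : Fin 2, star (σ a b) * σ a' b' = if a = a' ∧ b = b' then 1 else 0) :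
    (∀ a, star (Matrix.of fun i m => g i * σ a m) * (Matrix.of fun i m => g i * σ a m) = 1) ∧
      ((Matrix.of fun i m => g i * σ 0 m) * star (Matrix.of fun i m => g i * σ 0 m)) *
        ((Matrix.of fun i m => g i * σ 1 m) * star (Matrix.of fun i m => g i * σ 1 m)) = 0 := by
  constructor
  · intro a
    ext m n
    simp only [Matrix.mul_apply, Matrix.star_apply, Matrix.of_apply, Fin.sum_univ_two,
      Matrix.one_apply]
    have key : star (g 0 * σ a m) * (g 0 * σ a n) + star (g 1 * σ a m) * (g 1 * σ a n)
        = star (σ a m) * ((star (g 0) * g 0 + star (g 1) * g 1) * σ a n) := by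
      simp only [star_mul]; noncomm_ring
    rw [key, hg, one_mul, hσ]
    by_cases h : m = n <;> simp [h]
  · have hVV : ∀ a : Fin 2, (Matrix.of fun i m => g i * σ a m) *
        star (Matrix.of fun i m => g i * σ a m)
        = Matrix.of (fun i k => g i * ((σ a 0 * star (σ a 0) + σ a 1 * star (σ a 1)) * star (g k))) := by
      intro a
      ext i k
      simp only [Matrix.mul_apply, Matrix.star_apply, Matrix.of_apply, Fin.sum_univ_two, star_mul]
      noncomm_ring
    have h1 : ∀ p q : Fin 2, (σ 0 p * star (σ 0 p)) * (σ 1 q * star (σ 1 q)) = 0 := by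
      intro p q
      have h : star (σ 0 p) * σ 1 q = 0 := by
        rw [hσ, if_neg]
        rintro ⟨h01, -⟩
        exact absurd h01 (by decide)
      calc (σ 0 p * star (σ 0 p)) * (σ 1 q * star (σ 1 q))
          = σ 0 p * ((star (σ 0 p) * σ 1 q) * star (σ 1 q)) := by noncomm_ring
        _ = 0 := by rw [h, zero_mul, mul_zero]
    have hP01 : (σ 0 0 * star (σ 0 0) + σ 0 1 * star (σ 0 1)) *
        (σ 1 0 * star (σ 1 0) + σ 1 1 * star (σ 1 1)) = 0 := by
      rw [add_mul, mul_add, mul_add, h1, h1, h1, h1]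
      simp
    rw [hVV 0, hVV 1]
    ext i j
    simp only [Matrix.mul_apply, Matrix.of_apply, Fin.sum_univ_two, Matrix.zero_apply]
    have step1 : (g i * ((σ 0 0 * star (σ 0 0) + σ 0 1 * star (σ 0 1)) * star (g 0))) *
            (g 0 * ((σ 1 0 * star (σ 1 0) + σ 1 1 * star (σ 1 1)) * star (g j)))
          + (g i * ((σ 0 0 * star (σ 0 0) + σ 0 1 * star (σ 0 1)) * star (g 1))) *
            (g 1 * ((σ 1 0 * star (σ 1 0) + σ 1 1 * star (σ 1 1)) * star (g j)))
        = g i * ((σ 0 0 * star (σ 0 0) + σ 0 1 * star (σ 0 1)) *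
            ((star (g 0) * g 0 + star (g 1) * g 1) *
              ((σ 1 0 * star (σ 1 0) + σ 1 1 * star (σ 1 1)) * star (g j)))) := by
      noncomm_ring
    rw [step1, hg, one_mul]
    have step2 : (g i * ((σ 0 0 * star (σ 0 0) + σ 0 1 * star (σ 0 1)) *
            ((σ 1 0 * star (σ 1 0) + σ 1 1 * star (σ 1 1)) * star (g j))))
        = g i * (((σ 0 0 * star (σ 0 0) + σ 0 1 * star (σ 0 1)) *
            (σ 1 0 * star (σ 1 0) + σ 1 1 * star (σ 1 1))) * star (g j)) := by
      noncomm_ring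
    rw [step2, hP01, zero_mul, mul_zero]

set_option maxHeartbeats 4000000 in
/-- for a pull-back `A` of two unital properly infinite C*-algebras,
`M₂(A)` is properly infinite. -/
theorem stmt8 {A A₁ A₂ B : Type*}
    [CStarAlgebra A] [CStarAlgebra A₁] [CStarAlgebra A₂] [CStarAlgebra B]
    (φ₁ : A →⋆ₐ[ℂ] A₁) (φ₂ : A →⋆ₐ[ℂ] A₂) (π₁ : A₁ →⋆ₐ[ℂ] B) (π₂ : A₂ →⋆ₐ[ℂ] B)
    (hπ₁ : Function.Surjective π₁) (hπ₂ : Function.Surjective π₂)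
    (hcomp : ∀ a : A, π₁ (φ₁ a) = π₂ (φ₂ a))
    (hpb : ∀ a₁ a₂, π₁ a₁ = π₂ a₂ → ∃! a : A, φ₁ a = a₁ ∧ φ₂ a = a₂)
    (h₁ : IsProperlyInfinite (1 : A₁)) (h₂ : IsProperlyInfinite (1 : A₂)) :
    IsProperlyInfinite (1 : Matrix (Fin 2) (Fin 2) A) := by
  classical
  -- pull-back facts
  have hinj : ∀ a a' : A, φ₁ a = φ₁ a' → φ₂ a = φ₂ a' → a = a' := by
    intro a a' h1 h2
    obtain ⟨u, -, huniq⟩ := hpb (φ₁ a) (φ₂ a) (hcomp a)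
    exact (huniq a ⟨rfl, rfl⟩).trans (huniq a' ⟨h1.symm, h2.symm⟩).symm
  have hpull : ∀ (a₁ : A₁) (a₂ : A₂), π₁ a₁ = π₂ a₂ → ∃ a : A, φ₁ a = a₁ ∧ φ₂ a = a₂ :=
    fun a₁ a₂ h => (hpb a₁ a₂ h).exists
  -- isometries with orthogonal ranges
  obtain ⟨s₀, s₁, hs₀, hs₁, -, -, hsorth⟩ := h₁
  obtain ⟨t₀, t₁, ht₀, ht₁, -, -, htorth⟩ := h₂
  have hs01 : star s₀ * s₁ = 0 := star_mul_orth' hs₀ hs₁ hsorth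
  have hs10 : star s₁ * s₀ = 0 := by
    have := congrArg star hs01
    simpa [star_mul] using this
  have ht01 : star t₀ * t₁ = 0 := star_mul_orth' ht₀ ht₁ htorth
  have ht10 : star t₁ * t₀ = 0 := by
    have := congrArg star ht01
    simpa [star_mul] using this
  set s : Fin 2 → A₁ := ![s₀, s₁] with hs_def
  set t : Fin 2 → A₂ := ![t₀, t₁] with ht_def
  have hs : ∀ i j : Fin 2, star (s i) * s j = if i = j then 1 else 0 := by
    intro i j
    fin_cases i <;> fin_cases j <;> simp [hs_def, hs₀, hs₁, hs01, hs10]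
  have ht : ∀ i j : Fin 2, star (t i) * t j = if i = j then 1 else 0 := by
    intro i j
    fin_cases i <;> fin_cases j <;> simp [ht_def, ht₀, ht₁, ht01, ht10]
  -- four isometries with mutually orthogonal ranges on each side
  set σ : Fin 2 → Fin 2 → A₁ := fun a b => s a * s b with hσ_def
  set τ : Fin 2 → Fin 2 → A₂ := fun a b => t a * t b with hτ_def
  have hσ : ∀ a b a' b' : Fin 2, star (σ a b) * σ a' b' = if a = a' ∧ b = b' then 1 else 0 := by
    intro a b a' b'
    have e1 : star (σ a b) * σ a' b' = star (s b) * ((star (s a) * s a') * s b') := by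
      simp only [hσ_def, star_mul]
      noncomm_ring
    rw [e1, hs a a']
    by_cases h : a = a'
    · rw [if_pos h, one_mul, hs b b']
      by_cases h2 : b = b' <;> simp [h, h2]
    · rw [if_neg h]
      simp [h]
  have hτ : ∀ a b a' b' : Fin 2, star (τ a b) * τ a' b' = if a = a' ∧ b = b' then 1 else 0 := by
    intro a b a' b'
    have e1 : star (τ a b) * τ a' b' = star (t b) * ((star (t a) * t a') * t b') := by
      simp only [hτ_def, star_mul]
      noncomm_ring
    rw [e1, ht a a']
    by_cases h : a = a'
    · rw [if_pos h, one_mul, ht b b']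
      by_cases h2 : b = b' <;> simp [h, h2]
    · rw [if_neg h]
      simp [h]
  -- images in B
  have hπs : ∀ a b a' b' : Fin 2,
      star (π₁ (σ a b)) * π₁ (σ a' b') = if a = a' ∧ b = b' then 1 else 0 := by
    intro a b a' b'
    rw [← map_star, ← map_mul, hσ]
    split_ifs <;> simp
  have hπt : ∀ a b a' b' : Fin 2,
      star (π₂ (τ a b)) * π₂ (τ a' b') = if a = a' ∧ b = b' then 1 else 0 := by
    intro a b a' b'
    rw [← map_star, ← map_mul, hτ]
    split_ifs <;> simp
  have hπs' : ∀ (a b a' b' : Fin 2) (zz : B),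
      star (π₁ (σ a b)) * (π₁ (σ a' b') * zz) = if a = a' ∧ b = b' then zz else 0 := by
    intro a b a' b' zz
    rw [← mul_assoc, hπs]
    split_ifs <;> simp
  have hπt' : ∀ (a b a' b' : Fin 2) (zz : B),
      star (π₂ (τ a b)) * (π₂ (τ a' b') * zz) = if a = a' ∧ b = b' then zz else 0 := by
    intro a b a' b' zz
    rw [← mul_assoc, hπt]
    split_ifs <;> simp
  -- the partial isometry w₀ and range projection Q in B
  set w₀ : B := π₁ (σ 0 0) * star (π₂ (τ 0 0)) + π₁ (σ 0 1) * star (π₂ (τ 0 1))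
      + π₁ (σ 1 0) * star (π₂ (τ 1 0)) + π₁ (σ 1 1) * star (π₂ (τ 1 1)) with hw₀_def
  set Q : B := π₁ (σ 0 0) * star (π₁ (σ 0 0)) + π₁ (σ 0 1) * star (π₁ (σ 0 1))
      + π₁ (σ 1 0) * star (π₁ (σ 1 0)) + π₁ (σ 1 1) * star (π₁ (σ 1 1)) with hQ_def
  have hw₀w₀ : w₀ * star w₀ = Q := by
    simp only [hw₀_def, hQ_def, star_add, star_mul, star_star, add_mul, mul_add,
      mul_assoc, hπt']
    norm_num [Fin.ext_iff]
  have hQw₀ : Q * w₀ = w₀ := by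
    simp only [hQ_def, hw₀_def, add_mul, mul_add, mul_assoc, hπs']
    norm_num [Fin.ext_iff]
  have hQσ : ∀ a b : Fin 2, Q * π₁ (σ a b) = π₁ (σ a b) := by
    intro a b
    simp only [hQ_def, add_mul, mul_assoc, hπs]
    fin_cases a <;> fin_cases b <;> simp
  have hw₀sσ : ∀ a b : Fin 2, star w₀ * π₁ (σ a b) = π₂ (τ a b) := by
    intro a b
    simp only [hw₀_def, star_add, star_mul, star_star, add_mul, mul_assoc, hπs]
    fin_cases a <;> fin_cases b <;> simp
  -- a contractive-enough lift x of w₀ in A₁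
  obtain ⟨x₀, hx₀⟩ := hπ₁ w₀
  set h' : A₁ := x₀ * star x₀ with hh'_def
  have hu : IsUnit (1 + h') := by
    have hsp : ∀ r ∈ spectrum ℝ h', 0 ≤ r := by
      have := spectrum_star_mul_self_nonneg (b := star x₀)
      simpa [star_star, hh'_def] using this
    have hm : (-1 : ℝ) ∉ spectrum ℝ h' := fun hmem => by
      have := hsp _ hmem; linarith
    have h2 := (spectrum.notMem_iff.mp hm).neg
    have h3 : -(algebraMap ℝ A₁ (-1) - h') = 1 + h' := by
      rw [map_neg, map_one, neg_sub, sub_neg_eq_add, add_comm]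
    rwa [h3] at h2
  set u' : A₁ := ↑hu.unit⁻¹ with hu'_def
  have hul : u' * (1 + h') = 1 := by
    have h1 : (↑hu.unit⁻¹ : A₁) * ↑hu.unit = 1 := hu.unit.inv_mul
    rwa [hu.unit_spec] at h1
  have hur : (1 + h') * u' = 1 := by
    have h1 : (↑hu.unit : A₁) * ↑hu.unit⁻¹ = 1 := hu.unit.mul_inv
    rwa [hu.unit_spec] at h1
  have hh'sa : star h' = h' := by simp [hh'_def, star_mul]
  have husa : star u' = u' := by
    have h1 : star u' * (1 + h') = 1 := by
      have := congrArg star hur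
      rwa [star_mul, star_add, star_one, hh'sa] at this
    calc star u' = star u' * ((1 + h') * u') := by rw [hur, mul_one]
      _ = (star u' * (1 + h')) * u' := by rw [mul_assoc]
      _ = u' := by rw [h1, one_mul]
  set x : A₁ := u' * x₀ + u' * x₀ with hx_def
  have hπh' : π₁ h' = Q := by
    rw [hh'_def, map_mul, map_star, hx₀, hw₀w₀]
  have hπul : π₁ u' * (1 + Q) = 1 := by
    have h1 : π₁ (u' * (1 + h')) = π₁ 1 := by rw [hul]
    rwa [map_mul, map_add, map_one, hπh'] at h1
  have hπx : π₁ x = w₀ := by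
    rw [hx_def, map_add, map_mul, hx₀]
    calc π₁ u' * w₀ + π₁ u' * w₀ = π₁ u' * (w₀ + w₀) := (mul_add (π₁ u') w₀ w₀).symm
      _ = π₁ u' * ((1 + Q) * w₀) := by
          have e2 : (1 + Q) * w₀ = w₀ + w₀ := by rw [add_mul, one_mul, hQw₀]
          rw [e2]
      _ = (π₁ u' * (1 + Q)) * w₀ := (mul_assoc _ _ _).symm
      _ = w₀ := by rw [hπul, one_mul]
  -- 1 - x * star x is positive
  set z : A₁ := (1 - h') * u' with hz_def
  have hzz : star z * z = 1 - x * star x := by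
    have hstz : star z = u' * (1 - h') := by
      rw [hz_def, star_mul, husa, star_sub, star_one, hh'sa]
    have hone : u' * ((1 + h') * (1 + h')) * u' = 1 := by
      calc u' * ((1 + h') * (1 + h')) * u' = (u' * (1 + h')) * ((1 + h') * u') := by
            noncomm_ring
        _ = 1 := by rw [hul, hur, one_mul]
    calc star z * z = u' * ((1 - h') * (1 - h')) * u' := by
          rw [hstz, hz_def]; noncomm_ring
      _ = u' * ((1 + h') * (1 + h')) * u'
          - ((u' * x₀) * (star x₀ * u') + (u' * x₀) * (star x₀ * u')
            + ((u' * x₀) * (star x₀ * u') + (u' * x₀) * (star x₀ * u'))) := by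
          rw [hh'_def]; noncomm_ring
      _ = 1 - x * star x := by
          rw [hone, hx_def]
          simp only [star_add, star_mul, husa]
          congr 1
          noncomm_ring
  -- square root c of 1 - x * star x
  have hsazz : IsSelfAdjoint (star z * z) := IsSelfAdjoint.star_mul_self z
  set c : A₁ := cfc Real.sqrt (star z * z) with hc_def
  have hcsa : IsSelfAdjoint c := cfc_predicate _ _
  have hcc : c * c = star z * z := by
    rw [hc_def, ← cfc_mul _ _ (star z * z) (by fun_prop) (by fun_prop)]
    have e1 : cfc (fun r => Real.sqrt r * Real.sqrt r) (star z * z)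
        = cfc (id : ℝ → ℝ) (star z * z) := by
      apply cfc_congr
      intro r hr
      exact Real.mul_self_sqrt (spectrum_star_mul_self_nonneg r hr)
    rw [e1, cfc_id ℝ (star z * z)]
  have hxc : x * star x + c * c = 1 := by
    rw [hcc, hzz]
    abel
  -- image facts for c
  have hπc_sa : star (π₁ c) = π₁ c := by rw [← map_star, hcsa.star_eq]
  have hπcc : π₁ c * π₁ c = 1 - Q := by
    calc π₁ c * π₁ c = π₁ (c * c) := (map_mul π₁ c c).symm
      _ = π₁ (1 - x * star x) := by rw [hcc, hzz]
      _ = 1 - w₀ * star w₀ := by rw [map_sub, map_one, map_mul, map_star, hπx]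
      _ = 1 - Q := by rw [hw₀w₀]
  have hπcσ : ∀ a b : Fin 2, π₁ (c * σ a b) = 0 := by
    intro a b
    rw [map_mul]
    have h0 : star (π₁ c * π₁ (σ a b)) * (π₁ c * π₁ (σ a b)) = 0 := by
      calc star (π₁ c * π₁ (σ a b)) * (π₁ c * π₁ (σ a b))
          = star (π₁ (σ a b)) * ((π₁ c * π₁ c) * π₁ (σ a b)) := by
            rw [star_mul, hπc_sa]; noncomm_ring
        _ = star (π₁ (σ a b)) * ((1 - Q) * π₁ (σ a b)) := by rw [hπcc]
        _ = 0 := by rw [sub_mul, one_mul, hQσ a b, sub_self, mul_zero]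
    exact (CStarRing.star_mul_self_eq_zero_iff _).mp h0
  have hπxσ : ∀ a b : Fin 2, π₁ (star x * σ a b) = π₂ (τ a b) := by
    intro a b
    rw [map_mul, map_star, hπx]
    exact hw₀sσ a b
  -- entries of the two matrices over A
  have hEx : ∀ a b : Fin 2, ∃ p : A, φ₁ p = star x * σ a b ∧ φ₂ p = τ a b :=
    fun a b => hpull _ _ (hπxσ a b)
  choose top htop1 htop2 using hEx
  have hEc : ∀ a b : Fin 2, ∃ p : A, φ₁ p = c * σ a b ∧ φ₂ p = 0 := by
    intro a b
    apply hpull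
    rw [hπcσ a b, map_zero]
  choose bot hbot1 hbot2 using hEc
  set g₁ : Fin 2 → A₁ := ![star x, c] with hg₁_def
  set g₂ : Fin 2 → A₂ := ![1, 0] with hg₂_def
  have hg₁sum : star (g₁ 0) * g₁ 0 + star (g₁ 1) * g₁ 1 = 1 := by
    have e1 : star (g₁ 0) * g₁ 0 + star (g₁ 1) * g₁ 1 = x * star x + c * c := by
      simp [hg₁_def, hcsa.star_eq]
    rw [e1, hxc]
  have hg₂sum : star (g₂ 0) * g₂ 0 + star (g₂ 1) * g₂ 1 = 1 := by
    simp [hg₂_def]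
  obtain ⟨hV₁iso, hV₁orth⟩ := matrix_pair_key' g₁ σ hg₁sum hσ
  obtain ⟨hV₂iso, hV₂orth⟩ := matrix_pair_key' g₂ τ hg₂sum hτ
  set v : Matrix (Fin 2) (Fin 2) A :=
    Matrix.of ![![top 0 0, top 0 1], ![bot 0 0, bot 0 1]] with hv_def
  set w : Matrix (Fin 2) (Fin 2) A :=
    Matrix.of ![![top 1 0, top 1 1], ![bot 1 0, bot 1 1]] with hw_def
  have hmapmul₁ : ∀ M N : Matrix (Fin 2) (Fin 2) A, (M * N).map φ₁ = M.map φ₁ * N.map φ₁ := by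
    intro M N; ext i j
    simp only [Matrix.mul_apply, Matrix.map_apply, Fin.sum_univ_two, map_add, map_mul]
  have hmapmul₂ : ∀ M N : Matrix (Fin 2) (Fin 2) A, (M * N).map φ₂ = M.map φ₂ * N.map φ₂ := by
    intro M N; ext i j
    simp only [Matrix.mul_apply, Matrix.map_apply, Fin.sum_univ_two, map_add, map_mul]
  have hmapstar₁ : ∀ M : Matrix (Fin 2) (Fin 2) A, (star M).map φ₁ = star (M.map φ₁) := by
    intro M; ext i j
    simp only [Matrix.map_apply, Matrix.star_apply, map_star]
  have hmapstar₂ : ∀ M : Matrix (Fin 2) (Fin 2) A, (star M).map φ₂ = star (M.map φ₂) := by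
    intro M; ext i j
    simp only [Matrix.map_apply, Matrix.star_apply, map_star]
  have hmapone₁ : (1 : Matrix (Fin 2) (Fin 2) A).map φ₁ = 1 := by
    ext i j
    by_cases h : i = j <;> simp [Matrix.map_apply, Matrix.one_apply, h]
  have hmapone₂ : (1 : Matrix (Fin 2) (Fin 2) A).map φ₂ = 1 := by
    ext i j
    by_cases h : i = j <;> simp [Matrix.map_apply, Matrix.one_apply, h]
  have hmapzero₁ : (0 : Matrix (Fin 2) (Fin 2) A).map φ₁ = 0 := by
    ext i j; simp [Matrix.map_apply]
  have hmapzero₂ : (0 : Matrix (Fin 2) (Fin 2) A).map φ₂ = 0 := by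
    ext i j; simp [Matrix.map_apply]
  have hinjM : ∀ M N : Matrix (Fin 2) (Fin 2) A,
      M.map φ₁ = N.map φ₁ → M.map φ₂ = N.map φ₂ → M = N := by
    intro M N hm1 hm2
    ext i j
    apply hinj
    · have := congrArg (fun X => X i j) hm1
      simpa [Matrix.map_apply] using this
    · have := congrArg (fun X => X i j) hm2
      simpa [Matrix.map_apply] using this
  have hvmap₁ : v.map φ₁ = Matrix.of fun i m => g₁ i * σ 0 m := by
    ext i j
    fin_cases i <;> fin_cases j <;>
      simp [hv_def, Matrix.map_apply, htop1, hbot1, hg₁_def]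
  have hwmap₁ : w.map φ₁ = Matrix.of fun i m => g₁ i * σ 1 m := by
    ext i j
    fin_cases i <;> fin_cases j <;>
      simp [hw_def, Matrix.map_apply, htop1, hbot1, hg₁_def]
  have hvmap₂ : v.map φ₂ = Matrix.of fun i m => g₂ i * τ 0 m := by
    ext i j
    fin_cases i <;> fin_cases j <;>
      simp [hv_def, Matrix.map_apply, htop2, hbot2, hg₂_def]
  have hwmap₂ : w.map φ₂ = Matrix.of fun i m => g₂ i * τ 1 m := by
    ext i j
    fin_cases i <;> fin_cases j <;>
      simp [hw_def, Matrix.map_apply, htop2, hbot2, hg₂_def]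
  refine ⟨v, w, ?_, ?_, one_mul _, one_mul _, ?_⟩
  · apply hinjM
    · rw [hmapmul₁, hmapstar₁, hvmap₁, hV₁iso 0, hmapone₁]
    · rw [hmapmul₂, hmapstar₂, hvmap₂, hV₂iso 0, hmapone₂]
  · apply hinjM
    · rw [hmapmul₁, hmapstar₁, hwmap₁, hV₁iso 1, hmapone₁]
    · rw [hmapmul₂, hmapstar₂, hwmap₂, hV₂iso 1, hmapone₂]
  · apply hinjM
    · rw [hmapmul₁, hmapmul₁, hmapmul₁, hmapstar₁, hmapstar₁, hvmap₁, hwmap₁, hV₁orth,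
        hmapzero₁]
    · rw [hmapmul₂, hmapmul₂, hmapmul₂, hmapstar₂, hmapstar₂, hvmap₂, hwmap₂, hV₂orth,
        hmapzero₂]
end
end

section
/- Let X be a compact Hausdorff space and let A be a unital C(X)-algebra such that every fibre A_x, x ∈ X, is properly infinite. Then there exists a natural number n such that the matrix algebra M_n(A) is properly infinite. -/
noncomputable section

/-- The closed two-sided ideal `I_F = C₀(X \ F)·A` of a `C(X)`-algebra determined by a closed
set `F ⊆ X` (here just as a closed subset of `A`). -/
def fibreIdeal {X : Type*} [TopologicalSpace X] {A : Type*} [CStarAlgebra A]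
    (Θ : C(X, ℂ) →⋆ₐ[ℂ] A) (F : Set X) : Set A :=
  closure (Submodule.span ℂ
    {x : A | ∃ (f : C(X, ℂ)) (a : A), (∀ y ∈ F, f y = 0) ∧ x = Θ f * a} : Set A)

/-- The quotient `A/J` is (unitally) properly infinite: there are two elements of `A` which are
isometries with orthogonal range projections modulo `J`. -/
def QuotProperlyInfinite {A : Type*} [CStarAlgebra A] (J : Set A) : Prop :=
  ∃ s t : A, star s * s - 1 ∈ J ∧ star t * t - 1 ∈ J ∧ (s * star s) * (t * star t) ∈ J

/-!
Near each point `x`, the approximate isometries `s, t` witnessing that `A_x` is properly infinite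
can be corrected to exact ones. Take a cut-off `F = Θ f` with `f = 1` near `x` and supported where
`s*s - 1`, `s*t`, `t*t - 1` are small, and put `Z = [[s, t], [0, 0]]` in `M₂(A)`. Then
`m = 1 + F²(Z*Z - 1)` is close to `1`, and `Y = F Z m^(-1/2)` satisfies `Y*Y = 1 - (1 - F²) m⁻¹`,
so `Y*Y = 1` wherever `f = 1`: the first row of `Y` gives `S, T` with `S*S = T*T = 1` and
`S*T = 0` over a neighbourhood `U_x`. Over `U_x` the elements `Tᵃ S`, `a ∈ ℕ`, are then isometries
with pairwise orthogonal ranges. Cover `X` by finitely many `U_{x_i}` and take a partition of unity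
`ρ_i` subordinate to it; the matrices `V i j = √ρ_i T_i^(2j) S_i` and `W i j = √ρ_i T_i^(2j+1) S_i`
satisfy `V*V = W*W = 1` and `V*W = 0`.
-/

open Filter Topology Matrix

section StarRing

variable {R : Type*} [Ring R] [StarRing R]

theorem IsProperlyInfinite.of_subsingleton [Subsingleton R] (p : R) : IsProperlyInfinite p :=
  ⟨0, 0, Subsingleton.elim _ _, Subsingleton.elim _ _, Subsingleton.elim _ _,
    Subsingleton.elim _ _, Subsingleton.elim _ _⟩

theorem isProperlyInfinite_one_of_star_mul {v w : R} (hv : star v * v = 1)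
    (hw : star w * w = 1) (hvw : star v * w = 0) : IsProperlyInfinite (1 : R) :=
  ⟨v, w, hv, hw, one_mul _, one_mul _, by rw [mul_assoc, ← mul_assoc (star v), hvw]; simp⟩

theorem star_mul_self_eq_one_sub {c z r : R} (hc : ∀ b, Commute c b) (hcsa : star c = c)
    (hrsa : star r = r) (hr : r * (1 + c * c * (star z * z - 1)) * r = 1) :
    star (c * z * r) * (c * z * r) = 1 - (1 - c * c) * (r * r) := by
  have hcc : ∀ b, c * c * b = b * (c * c) := fun b => ((hc b).mul_left (hc b)).eq
  calc star (c * z * r) * (c * z * r) = r * (star z * (c * c)) * z * r := by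
        simp only [star_mul, hcsa, hrsa]; noncomm_ring
    _ = r * (1 + c * c * (star z * z - 1)) * r - r * r + r * (c * c) * r := by
        rw [← hcc]; noncomm_ring
    _ = 1 - (1 - c * c) * (r * r) := by rw [hr, ← hcc]; noncomm_ring

theorem mul_star_pow_mul_mul_pow_mul {c S T : R} (hc : ∀ b, Commute c b) (hcsa : star c = c)
    (hS : c * (star S * S) = c) (hT : c * (star T * T) = c) (hST : c * (star S * T) = 0)
    (a b : ℕ) : c * (star (T ^ a * S) * (T ^ b * S)) = if a = b then c else 0 := by
  have hzero : ∀ b, c * (star S * (T ^ (b + 1) * S)) = 0 := fun b => by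
    rw [pow_succ', mul_assoc, ← mul_assoc (star S), ← mul_assoc, hST, zero_mul]
  induction a generalizing b with
  | zero =>
    cases b with
    | zero => simpa using hS
    | succ b => simpa using hzero b
  | succ a ih =>
    cases b with
    | zero =>
      have h := congrArg star (hzero a)
      rw [star_mul, hcsa, ← (hc _).eq, star_zero] at h
      simpa [star_mul] using h
    | succ b =>
      calc c * (star (T ^ (a + 1) * S) * (T ^ (b + 1) * S))
          = c * (star (T ^ a * S) * (star T * T * (T ^ b * S))) := by
            simp only [pow_succ', star_mul, mul_assoc]
        _ = star (T ^ a * S) * (c * (star T * T) * (T ^ b * S)) := by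
            rw [(hc _).left_comm]; simp only [mul_assoc]
        _ = if a + 1 = b + 1 then c else 0 := by
            rw [hT, ← (hc _).left_comm, ih]; simp

theorem Matrix.conjTranspose_of_mul_of_eq_ite {ι κ : Type*} [Fintype ι] (e : ι → ℕ → R)
    (p : ι → R) (he : ∀ i a b, star (e i a) * e i b = if a = b then p i else 0)
    (hp : ∑ i, p i = 1) (φ ψ : κ → ℕ) :
    (Matrix.of fun i k => e i (φ k))ᴴ * Matrix.of (fun i l => e i (ψ l))
      = Matrix.of fun k l => if φ k = ψ l then 1 else 0 := by
  ext k l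
  simp only [Matrix.mul_apply, Matrix.conjTranspose_apply, Matrix.of_apply, he]
  split_ifs <;> simp [hp]

end StarRing

section CStarAlgebra

variable {A : Type*} [CStarAlgebra A]

theorem exists_isSelfAdjoint_mul_mul_eq_one {m : A} (hm : IsSelfAdjoint m) (h : ‖m - 1‖ < 1) :
    ∃ r : A, IsSelfAdjoint r ∧ r * m * r = 1 := by
  cases subsingleton_or_nontrivial A
  · exact ⟨0, .zero A, Subsingleton.elim _ _⟩
  have hpos : ∀ θ ∈ spectrum ℝ m, 0 < θ := fun θ hθ => by
    have h1 : θ - 1 ∈ spectrum ℝ (m - algebraMap ℝ A 1) := by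
      rw [← spectrum.sub_singleton_eq]
      exact Set.sub_mem_sub hθ rfl
    have h2 := spectrum.norm_le_norm_of_mem h1
    rw [map_one, Real.norm_eq_abs] at h2
    linarith [neg_abs_le (θ - 1)]
  have hcont : ContinuousOn (fun θ : ℝ => (√θ)⁻¹) (spectrum ℝ m) :=
    Real.continuous_sqrt.continuousOn.inv₀ fun θ hθ => (Real.sqrt_pos.2 (hpos θ hθ)).ne'
  refine ⟨cfc (fun θ : ℝ => (√θ)⁻¹) m, cfc_predicate _ m, ?_⟩
  calc cfc (fun θ : ℝ => (√θ)⁻¹) m * m * cfc (fun θ : ℝ => (√θ)⁻¹) m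
      = cfc (fun θ : ℝ => (√θ)⁻¹ * θ * (√θ)⁻¹) m := by
        nth_rewrite 2 [← cfc_id' ℝ m]
        rw [← cfc_mul _ (fun θ : ℝ => θ) m hcont (continuousOn_id' _),
          ← cfc_mul (fun θ : ℝ => (√θ)⁻¹ * θ) _ m (hcont.mul (continuousOn_id' _)) hcont]
    _ = cfc (fun _ : ℝ => (1 : ℝ)) m := cfc_congr fun θ hθ => by
        have := (Real.sqrt_pos.2 (hpos θ hθ)).ne'
        field_simp
        rw [Real.sq_sqrt (hpos θ hθ).le]
    _ = 1 := by simpa [Pi.one_def] using cfc_one ℝ m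

theorem exists_star_mul_self_eq_one_sub {c z : A} (hc : ∀ b, Commute c b) (hcsa : star c = c)
    (h : ‖c * c * (star z * z - 1)‖ < 1) :
    ∃ r : A, star (c * z * r) * (c * z * r) = 1 - (1 - c * c) * (r * r) := by
  have hm : IsSelfAdjoint (1 + c * c * (star z * z - 1)) := by
    have hX : IsSelfAdjoint (star z * z - 1) := (IsSelfAdjoint.star_mul_self z).sub (.one _)
    refine (IsSelfAdjoint.one _).add ?_
    rw [IsSelfAdjoint, star_mul, star_mul, hcsa, hX.star_eq, ((hc _).mul_left (hc _)).eq]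
  obtain ⟨r, hr, hrm⟩ := exists_isSelfAdjoint_mul_mul_eq_one hm (by rwa [add_sub_cancel_left])
  exact ⟨r, star_mul_self_eq_one_sub hc hcsa hr hrm⟩

variable [PartialOrder A] [StarOrderedRing A]

open WithCStarModule in
theorem CStarMatrix.norm_le_sum_norm_apply {m n : Type*} [Fintype m] [Fintype n]
    (M : CStarMatrix m n A) : ‖M‖ ≤ ∑ i, ∑ j, ‖M i j‖ := by
  rw [CStarMatrix.norm_def]
  refine (CStarMatrix.toCLM M).opNorm_le_bound (by positivity) fun v => ?_
  rw [Finset.sum_comm, Finset.sum_mul]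
  refine (pi_norm_le_sum_norm _).trans (Finset.sum_le_sum fun j _ => ?_)
  rw [CStarMatrix.toCLM_apply_eq_sum, equiv_symm_pi_apply, Finset.sum_mul]
  refine (norm_sum_le _ _).trans (Finset.sum_le_sum fun i _ => ?_)
  rw [mul_comm]
  exact (norm_mul_le _ _).trans (by gcongr; exact norm_apply_le_norm v i)

theorem exists_isometries_of_norm_lt {F s t : A} (hF : ∀ b, Commute F b) (hFsa : star F = F)
    (h : ‖F * F * (star s * s - 1)‖ + ‖F * F * (star s * t)‖ + ‖F * F * (star t * s)‖
      + ‖F * F * (star t * t - 1)‖ < 1) :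
    ∃ S T : A, ∀ Γ : A, Γ * (1 - F * F) = 0 →
      Γ * (star S * S) = Γ ∧ Γ * (star T * T) = Γ ∧ Γ * (star S * T) = 0 := by
  let diag : A → CStarMatrix (Fin 2) (Fin 2) A := fun a => .ofMatrix (Matrix.scalar _ a)
  have diag_mul : ∀ a (M : CStarMatrix (Fin 2) (Fin 2) A) i j, (diag a * M) i j = a * M i j :=
    fun _ _ _ _ => Matrix.diagonal_mul _ _ _ _
  have diag_apply : ∀ a (i j : Fin 2), diag a i j = if i = j then a else 0 :=
    fun _ _ _ => Matrix.diagonal_apply _ _ _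
  have hFsa' : star (diag F) = diag F := by
    change (Matrix.diagonal fun _ => F)ᴴ = _
    rw [Matrix.diagonal_conjTranspose, Pi.star_def, hFsa]
    rfl
  have hF' : ∀ M, Commute (diag F) M := Matrix.scalar_commute F hF
  let Z : CStarMatrix (Fin 2) (Fin 2) A := .ofMatrix !![s, t; 0, 0]
  obtain ⟨r, hr⟩ := exists_star_mul_self_eq_one_sub (z := Z) hF' hFsa' <| by
    refine (CStarMatrix.norm_le_sum_norm_apply _).trans_lt ?_
    simpa [Fin.sum_univ_two, mul_assoc, add_assoc, diag_mul, diag_apply, CStarMatrix.mul_apply,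
      CStarMatrix.star_apply, Z] using h
  set Y := diag F * Z * r
  have hY₁ : ∀ j, Y 1 j = 0 := fun j => by simp [Y, CStarMatrix.mul_apply, diag_mul, Z]
  refine ⟨Y 0 0, Y 0 1, fun Γ hΓ => ?_⟩
  have hΓY : diag Γ * (star Y * Y) = diag Γ := by
    have : diag Γ * (1 - diag F * diag F) = 0 := by
      ext i j
      by_cases hij : i = j <;> simp [hij, diag_mul, diag_apply, hΓ]
    rw [hr, mul_sub, mul_one, ← mul_assoc, this, zero_mul, sub_zero]
  have key : ∀ j k, Γ * (star (Y 0 j) * Y 0 k) = diag Γ j k := fun j k => by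
    simpa [diag_mul, CStarMatrix.mul_apply, CStarMatrix.star_apply, hY₁, Fin.sum_univ_two] using
      congrArg (fun M : CStarMatrix (Fin 2) (Fin 2) A => M j k) hΓY
  exact ⟨by simpa [diag_apply] using key 0 0, by simpa [diag_apply] using key 1 1,
    by simpa [diag_apply] using key 0 1⟩

end CStarAlgebra

section CXAlgebra

variable {X : Type*} [TopologicalSpace X] {A : Type*} [CStarAlgebra A]

variable (X) in
def complexify : C(X, ℝ) →⋆ₐ[ℝ] C(X, ℂ) :=
  ContinuousMap.compStarAlgHom X (StarAlgHom.ofId ℝ ℂ) Complex.continuous_ofReal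

theorem complexify_apply (g : C(X, ℝ)) (y : X) : complexify X g y = g y := rfl

def realHom (Θ : C(X, ℂ) →⋆ₐ[ℂ] A) : C(X, ℝ) →⋆ₐ[ℝ] A :=
  (Θ.restrictScalars ℝ).comp (complexify X)

theorem star_realHom (Θ : C(X, ℂ) →⋆ₐ[ℂ] A) (g : C(X, ℝ)) :
    star (realHom Θ g) = realHom Θ g := by
  rw [← map_star, star_trivial]

theorem commute_realHom {Θ : C(X, ℂ) →⋆ₐ[ℂ] A}
    (hcent : ∀ (f : C(X, ℂ)) (a : A), Θ f * a = a * Θ f) (g : C(X, ℝ)) (b : A) :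
    Commute (realHom Θ g) b :=
  hcent _ b

def IsOrthIsometryPairOn (Θ : C(X, ℂ) →⋆ₐ[ℂ] A) (U : Set X) (S T : A) : Prop :=
  ∀ γ : C(X, ℝ), tsupport γ ⊆ U →
    realHom Θ γ * (star S * S) = realHom Θ γ ∧ realHom Θ γ * (star T * T) = realHom Θ γ ∧
      realHom Θ γ * (star S * T) = 0

variable [CompactSpace X]

theorem norm_realHom_le (Θ : C(X, ℂ) →⋆ₐ[ℂ] A) (g : C(X, ℝ)) :
    ‖realHom Θ g‖ ≤ ‖g‖ :=
  (NonUnitalStarAlgHom.norm_apply_le Θ _).trans <|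
    (ContinuousMap.norm_le _ (norm_nonneg g)).2 fun y => by
      change ‖complexify X g y‖ ≤ ‖g‖
      rw [complexify_apply, Complex.norm_real]
      exact g.norm_coe_le_norm y

/-- The quantitative form in which `a ∈ fibreIdeal Θ {x}` is used: cut-offs concentrated near `x`
make `a` small. -/
def IsNegligibleAt (Θ : C(X, ℂ) →⋆ₐ[ℂ] A) (x : X) (a : A) : Prop :=
  ∀ ε > 0, ∀ᶠ V in (𝓝 x).smallSets,
    ∀ g : C(X, ℝ), ‖g‖ ≤ 1 → (∀ y ∉ V, g y = 0) → ‖realHom Θ g * a‖ < ε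

namespace IsNegligibleAt

variable {Θ : C(X, ℂ) →⋆ₐ[ℂ] A} {x : X} {a b : A}

theorem of_norm_le (ha : IsNegligibleAt Θ x a) (C : ℝ)
    (h : ∀ g, ‖realHom Θ g * b‖ ≤ C * ‖realHom Θ g * a‖) : IsNegligibleAt Θ x b := by
  intro ε hε
  have hC : 0 < max C 1 := lt_max_of_lt_right one_pos
  filter_upwards [ha (ε / max C 1) (by positivity)] with V hV g hg hgV
  calc ‖realHom Θ g * b‖ ≤ max C 1 * ‖realHom Θ g * a‖ :=
        (h g).trans (mul_le_mul_of_nonneg_right (le_max_left C 1) (norm_nonneg _))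
    _ < max C 1 * (ε / max C 1) := mul_lt_mul_of_pos_left (hV g hg hgV) hC
    _ = ε := mul_div_cancel₀ ε hC.ne'

theorem add (ha : IsNegligibleAt Θ x a) (hb : IsNegligibleAt Θ x b) :
    IsNegligibleAt Θ x (a + b) := by
  intro ε hε
  filter_upwards [ha (ε / 2) (by positivity), hb (ε / 2) (by positivity)]
    with V haV hbV g hg hgV
  calc ‖realHom Θ g * (a + b)‖ ≤ ‖realHom Θ g * a‖ + ‖realHom Θ g * b‖ := by
        rw [mul_add]; exact norm_add_le _ _
    _ < ε / 2 + ε / 2 := add_lt_add (haV g hg hgV) (hbV g hg hgV)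
    _ = ε := add_halves ε

theorem neg (ha : IsNegligibleAt Θ x a) : IsNegligibleAt Θ x (-a) :=
  ha.of_norm_le 1 fun g => by rw [mul_neg, norm_neg, one_mul]

theorem sub (ha : IsNegligibleAt Θ x a) (hb : IsNegligibleAt Θ x b) :
    IsNegligibleAt Θ x (a - b) := by
  simpa only [sub_eq_add_neg] using ha.add hb.neg

theorem mul_left (hcent : ∀ (f : C(X, ℂ)) (a : A), Θ f * a = a * Θ f)
    (ha : IsNegligibleAt Θ x a) (c : A) : IsNegligibleAt Θ x (c * a) :=
  ha.of_norm_le ‖c‖ fun g => by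
    rw [(commute_realHom hcent g c).left_comm]
    exact norm_mul_le _ _

theorem mul_right (ha : IsNegligibleAt Θ x a) (c : A) : IsNegligibleAt Θ x (a * c) :=
  ha.of_norm_le ‖c‖ fun g => by
    rw [← mul_assoc, mul_comm ‖c‖]
    exact norm_mul_le _ _

theorem star (hcent : ∀ (f : C(X, ℂ)) (a : A), Θ f * a = a * Θ f)
    (ha : IsNegligibleAt Θ x a) : IsNegligibleAt Θ x (star a) :=
  ha.of_norm_le 1 fun g => by
    rw [one_mul, ← norm_star, star_mul, star_star, star_realHom, (commute_realHom hcent g a).eq]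

end IsNegligibleAt

variable {Θ : C(X, ℂ) →⋆ₐ[ℂ] A} {x : X}

theorem isClosed_setOf_isNegligibleAt : IsClosed {a : A | IsNegligibleAt Θ x a} := by
  refine isClosed_of_closure_subset fun a ha ε hε => ?_
  obtain ⟨b, hb, hab⟩ := Metric.mem_closure_iff.1 ha (ε / 2) (by positivity)
  filter_upwards [hb (ε / 2) (by positivity)] with V hV g hg hgV
  calc ‖realHom Θ g * a‖ ≤ ‖realHom Θ g * (a - b)‖ + ‖realHom Θ g * b‖ := by
        simpa [← mul_add] using norm_add_le (realHom Θ g * (a - b)) (realHom Θ g * b)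
    _ < ε / 2 + ε / 2 := by
        refine add_lt_add_of_le_of_lt ?_ (hV g hg hgV)
        calc ‖realHom Θ g * (a - b)‖ ≤ ‖g‖ * ‖a - b‖ :=
              (norm_mul_le _ _).trans
                (mul_le_mul_of_nonneg_right (norm_realHom_le Θ g) (norm_nonneg _))
          _ ≤ 1 * (ε / 2) := by
              gcongr
              rw [← dist_eq_norm]; exact hab.le
          _ = ε / 2 := one_mul _
    _ = ε := add_halves ε

theorem isNegligibleAt_mul_of_apply_eq_zero {h : C(X, ℂ)} (hx : h x = 0) (b : A) :
    IsNegligibleAt Θ x (Θ h * b) := by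
  intro ε hε
  set δ := ε / (‖b‖ + 1)
  have hV : {y | ‖h y‖ < δ} ∈ 𝓝 x :=
    (continuous_norm.comp h.continuous).continuousAt.preimage_mem_nhds
      (Iio_mem_nhds (by simp [hx, δ]; positivity))
  refine eventually_smallSets.2 ⟨_, hV, fun V hVsub g hg hgV => ?_⟩
  have hgh : ‖complexify X g * h‖ ≤ δ := by
    refine (ContinuousMap.norm_le _ (by positivity)).2 fun y => ?_
    rw [ContinuousMap.mul_apply, complexify_apply, norm_mul, Complex.norm_real]
    by_cases hy : y ∈ V
    · calc ‖g y‖ * ‖h y‖ ≤ 1 * δ :=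
            mul_le_mul ((g.norm_coe_le_norm y).trans hg) (hVsub hy).le (norm_nonneg _) zero_le_one
        _ = δ := one_mul δ
    · simp [hgV y hy, δ]; positivity
  calc ‖realHom Θ g * (Θ h * b)‖ ≤ δ * ‖b‖ := by
        rw [← mul_assoc,
          show realHom Θ g * Θ h = Θ (complexify X g * h) from (map_mul Θ _ _).symm]
        refine (norm_mul_le _ _).trans (mul_le_mul_of_nonneg_right ?_ (norm_nonneg b))
        exact (NonUnitalStarAlgHom.norm_apply_le Θ (complexify X g * h)).trans hgh
    _ < ε := by
        rw [div_mul_eq_mul_div, div_lt_iff₀ (by positivity)]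
        nlinarith

theorem IsNegligibleAt.of_mem_fibreIdeal (hcent : ∀ (f : C(X, ℂ)) (a : A), Θ f * a = a * Θ f)
    {a : A} (ha : a ∈ fibreIdeal Θ {x}) : IsNegligibleAt Θ x a := by
  refine closure_minimal (fun b hb => ?_) isClosed_setOf_isNegligibleAt ha
  induction hb using Submodule.span_induction with
  | mem b hb =>
    obtain ⟨f, c, hf, rfl⟩ := hb
    exact isNegligibleAt_mul_of_apply_eq_zero (hf x rfl) c
  | zero => simpa using isNegligibleAt_mul_of_apply_eq_zero (Θ := Θ) (h := 0) rfl 0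
  | add b c _ _ hb hc => exact hb.add hc
  | smul z b _ hb => simpa [Algebra.smul_def] using hb.mul_left hcent (algebraMap ℂ A z)

variable [T2Space X]

theorem exists_cutoff {V : Set X} (hV : V ∈ 𝓝 x) :
    ∃ f : C(X, ℝ), ‖f‖ ≤ 1 ∧ (∀ y ∉ V, f y = 0) ∧ ∀ᶠ y in 𝓝 x, f y = 1 := by
  obtain ⟨W, hWo, hxW, hWV⟩ := normal_exists_closure_subset isClosed_singleton isOpen_interior
    (Set.singleton_subset_iff.2 (mem_interior_iff_mem_nhds.2 hV))
  obtain ⟨f, hf0, hf1, hf01⟩ := exists_continuous_zero_one_of_isClosed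
    isOpen_interior.isClosed_compl isClosed_closure
    (Set.disjoint_compl_left_iff_subset.2 hWV)
  refine ⟨f, (ContinuousMap.norm_le _ zero_le_one).2 fun y => ?_, fun y hy => hf0 ?_,
    eventually_of_mem (hWo.mem_nhds (Set.singleton_subset_iff.1 hxW))
      fun y hy => hf1 (subset_closure hy)⟩
  · rw [Real.norm_eq_abs, abs_le]; constructor <;> linarith [(hf01 y).1, (hf01 y).2]
  · exact fun h => hy (interior_subset h)

theorem exists_isOrthIsometryPairOn [PartialOrder A] [StarOrderedRing A]
    (hcent : ∀ (f : C(X, ℂ)) (a : A), Θ f * a = a * Θ f)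
    (hx : QuotProperlyInfinite (fibreIdeal Θ {x})) :
    ∃ U, IsOpen U ∧ x ∈ U ∧ ∃ S T : A, IsOrthIsometryPairOn Θ U S T := by
  obtain ⟨s, t, hs₀, ht₀, hd₀⟩ := hx
  have hs := IsNegligibleAt.of_mem_fibreIdeal hcent hs₀
  have ht := IsNegligibleAt.of_mem_fibreIdeal hcent ht₀
  have hd := IsNegligibleAt.of_mem_fibreIdeal hcent hd₀
  have hst : IsNegligibleAt Θ x (star s * t) := by
    have : star s * t = star s * (s * star s * (t * star t)) * t - (star s * s - 1) * (star s * t)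
        - star s * s * (star s * t) * (star t * t - 1) := by noncomm_ring
    rw [this]
    exact (((hd.mul_left hcent _).mul_right _).sub (hs.mul_right _)).sub (ht.mul_left hcent _)
  have hts : IsNegligibleAt Θ x (star t * s) := by simpa using hst.star hcent
  obtain ⟨V, hV, hVsmall⟩ := eventually_smallSets.1 <|
    ((hs (1 / 4) (by norm_num)).and (hst (1 / 4) (by norm_num))).and
      ((hts (1 / 4) (by norm_num)).and (ht (1 / 4) (by norm_num)))
  obtain ⟨⟨h₁, h₂⟩, h₃, h₄⟩ := hVsmall V subset_rfl
  obtain ⟨f, hf, hfV, hfx⟩ := exists_cutoff hV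
  obtain ⟨U, hUf, hUo, hxU⟩ := eventually_nhds_iff.1 hfx
  have hff : ‖f * f‖ ≤ 1 := (norm_mul_le f f).trans (mul_le_one₀ hf (norm_nonneg f) hf)
  have hffV : ∀ y ∉ V, (f * f) y = 0 := fun y hy => by simp [hfV y hy]
  obtain ⟨S, T, hST⟩ := exists_isometries_of_norm_lt (F := realHom Θ f) (s := s) (t := t)
    (commute_realHom hcent f) (star_realHom Θ f) <| by
      simp only [← map_mul]
      linarith [h₁ _ hff hffV, h₂ _ hff hffV, h₃ _ hff hffV, h₄ _ hff hffV]
  refine ⟨U, hUo, hxU, S, T, fun γ hγ => hST _ ?_⟩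
  have : γ * (1 - f * f) = 0 := by
    ext y
    by_cases hy : y ∈ tsupport γ
    · simp [hUf y (hγ hy)]
    · simp [image_eq_zero_of_notMem_tsupport hy]
  rw [← map_one (realHom Θ), ← map_mul, ← map_sub, ← map_mul, this, map_zero]

theorem isProperlyInfinite_one_of_isOrthIsometryPairOn
    (hcent : ∀ (f : C(X, ℂ)) (a : A), Θ f * a = a * Θ f) {ι : Type*} [Fintype ι] [DecidableEq ι]
    (U : ι → Set X) (hU : ∀ i, IsOpen (U i)) (hcover : ⋃ i, U i = Set.univ) (S T : ι → A)
    (hST : ∀ i, IsOrthIsometryPairOn Θ (U i) (S i) (T i)) :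
    IsProperlyInfinite (1 : Matrix ι ι A) := by
  obtain ⟨ρ, hρ⟩ := PartitionOfUnity.exists_isSubordinate isClosed_univ U hU hcover.ge
  let σ : ι → C(X, ℝ) := fun i => ⟨fun y => √(ρ i y), by fun_prop⟩
  have hσ : ∀ i, σ i * σ i = ρ i := fun i => by
    ext y; exact Real.mul_self_sqrt (ρ.nonneg i y)
  let e : ι → ℕ → A := fun i a => realHom Θ (σ i) * (T i ^ a * S i)
  have he : ∀ i a b, star (e i a) * e i b = if a = b then realHom Θ (ρ i) else 0 := by
    intro i a b
    obtain ⟨h₁, h₂, h₃⟩ := hST i (ρ i) (hρ i)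
    calc star (e i a) * e i b
        = realHom Θ (σ i * σ i) * (star (T i ^ a * S i) * (T i ^ b * S i)) := by
          simp only [e, star_mul, star_realHom, map_mul, mul_assoc,
            (commute_realHom hcent (σ i) _).left_comm]
      _ = _ := by
          rw [hσ]
          exact mul_star_pow_mul_mul_pow_mul (commute_realHom hcent _) (star_realHom Θ _)
            h₁ h₂ h₃ a b
  have hsum : ∑ i, realHom Θ (ρ i) = 1 := by
    rw [← map_sum, ← map_one (realHom Θ)]
    congr 1
    ext y
    simpa [finsum_eq_sum_of_fintype] using ρ.sum_eq_one (Set.mem_univ y)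
  let k := Fintype.equivFin ι
  have hVW := Matrix.conjTranspose_of_mul_of_eq_ite (κ := ι) e _ he hsum
  refine isProperlyInfinite_one_of_star_mul (v := .of fun i j => e i (2 * k j))
    (w := .of fun i j => e i (2 * k j + 1)) ?_ ?_ ?_ <;> rw [Matrix.star_eq_conjTranspose, hVW] <;>
    ext j l
  · simp [Matrix.one_apply, Fin.val_inj]
  · simp [Matrix.one_apply, Fin.val_inj]
  · simpa using fun h => absurd h (by omega)

end CXAlgebra

/-- a unital `C(X)`-algebra over a compact Hausdorff space all of whose fibres are
properly infinite has some matrix algebra `Mₙ(A)` properly infinite. -/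
theorem stmt9 {X : Type*} [TopologicalSpace X] [CompactSpace X] [T2Space X]
    {A : Type*} [CStarAlgebra A]
    (Θ : C(X, ℂ) →⋆ₐ[ℂ] A) (hcent : ∀ (f : C(X, ℂ)) (a : A), Θ f * a = a * Θ f)
    (hfibres : ∀ x : X, QuotProperlyInfinite (fibreIdeal Θ {x})) :
    ∃ n : ℕ, IsProperlyInfinite (1 : Matrix (Fin (n + 1)) (Fin (n + 1)) A) := by
  let _ := CStarAlgebra.spectralOrder A
  have _ := CStarAlgebra.spectralOrderedRing A
  rcases isEmpty_or_nonempty X with hX | ⟨⟨x₀⟩⟩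
  · have : Subsingleton A := subsingleton_of_zero_eq_one <| by
      rw [← map_one Θ, ← map_zero Θ, Subsingleton.elim (0 : C(X, ℂ)) 1]
    exact ⟨0, .of_subsingleton _⟩
  choose U hUo hxU S T hST using fun x => exists_isOrthIsometryPairOn hcent (hfibres x)
  obtain ⟨t, ht⟩ := CompactSpace.elim_nhds_subcover U fun x => (hUo x).mem_nhds (hxU x)
  let p : Fin (t.card + 1) → X := Fin.cons x₀ fun i => t.equivFin.symm i
  refine ⟨t.card, isProperlyInfinite_one_of_isOrthIsometryPairOn hcent (U ∘ p) (fun _ => hUo _)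
    ?_ (S ∘ p) (T ∘ p) fun _ => hST _⟩
  refine Set.eq_univ_of_forall fun y => ?_
  obtain ⟨z, hz, hyz⟩ : ∃ z ∈ t, y ∈ U z := by simpa using ht.ge (Set.mem_univ y)
  exact Set.mem_iUnion.2 ⟨(t.equivFin ⟨z, hz⟩).succ, by simpa [p] using hyz⟩
end
end

section
/- Let A be a unital C*-algebra, v a unitary in A with diag(v,1) homotopic to 1 in U₂(A) via a path u_t, and p(t) = u_t diag(1,0) u_t* the resulting projection in C(T, M₂(A)). If v is homotopic to 1 in U(A), then p is Murray–von Neumann equivalent to the constant projection diag(1,0) in C(T, M₂(A)). -/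
noncomputable section

/-- if moreover `v ∼ₕ 1` in `U(A)`, then the projection
`p(t) = u_t diag(1,0) u_t*` is Murray–von Neumann equivalent to the constant projection
`diag(1,0)` in `C(𝕋, M₂(A))`. -/
theorem stmt12 {A : Type*} [CStarAlgebra A] (v : unitary A)
    (u : C(unitInterval, Matrix (Fin 2) (Fin 2) A))
    (hu : ∀ t, u t ∈ unitary (Matrix (Fin 2) (Fin 2) A))
    (hu0 : u 0 = 1)
    (hu1 : u 1 = Matrix.diagonal (fun i => if i = 0 then v.val else 1))
    (hv : Joined (1 : unitary A) v) :
    ∃ w : C(unitInterval, Matrix (Fin 2) (Fin 2) A),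
      w 0 = w 1 ∧
      (∀ t, star (w t) * w t =
        u t * Matrix.diagonal (fun i => if i = 0 then (1 : A) else 0) * star (u t)) ∧
      (∀ t, w t * star (w t) = Matrix.diagonal (fun i => if i = 0 then (1 : A) else 0)) := by
  classical
  obtain ⟨γ⟩ := hv
  set e : Matrix (Fin 2) (Fin 2) A :=
    Matrix.diagonal (fun i => if i = 0 then (1 : A) else 0) with he
  have diag_eq : ∀ f g : Fin 2 → A, (∀ i, f i = g i) →
      Matrix.diagonal f = Matrix.diagonal g := fun f g h => by rw [funext h]
  have star_diag : ∀ f : Fin 2 → A,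
      star (Matrix.diagonal f) = Matrix.diagonal (fun i => star (f i)) := fun f => by
    rw [Matrix.star_eq_conjTranspose, Matrix.diagonal_conjTranspose]
    exact diag_eq _ _ (fun i => rfl)
  have hγcont : Continuous fun t : unitInterval => (γ t : A) :=
    continuous_subtype_val.comp γ.continuous
  have hdcont : Continuous fun t : unitInterval =>
      Matrix.diagonal (fun i : Fin 2 => if i = 0 then (γ t : A) else 1) := by
    apply Continuous.matrix_diagonal
    apply continuous_pi
    intro i
    by_cases hi : i = 0 <;> simp [hi] <;> [exact hγcont; exact continuous_const]
  have hwcont : Continuous fun t : unitInterval =>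
      Matrix.diagonal (fun i : Fin 2 => if i = 0 then (γ t : A) else 1) * e * star (u t) :=
    (hdcont.mul continuous_const).mul (u.continuous.star)
  have hestar : star e = e := by
    rw [he, star_diag]
    exact diag_eq _ _ (fun i => by by_cases hi : i = 0 <;> simp [hi])
  have hee : e * e = e := by
    rw [he, Matrix.diagonal_mul_diagonal]
    exact diag_eq _ _ (fun i => by by_cases hi : i = 0 <;> simp [hi])
  have hded : ∀ t, Matrix.diagonal (fun i : Fin 2 => if i = 0 then (γ t : A) else 1) * e *
      star (Matrix.diagonal (fun i : Fin 2 => if i = 0 then (γ t : A) else 1)) = e := by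
    intro t
    rw [star_diag, he, Matrix.diagonal_mul_diagonal, Matrix.diagonal_mul_diagonal]
    exact diag_eq _ _ (fun i => by
      by_cases hi : i = 0 <;> simp [hi, Unitary.coe_mul_star_self (γ t)])
  have hdd : ∀ t, star (Matrix.diagonal (fun i : Fin 2 => if i = 0 then (γ t : A) else 1)) *
      Matrix.diagonal (fun i : Fin 2 => if i = 0 then (γ t : A) else 1) = 1 := by
    intro t
    rw [star_diag, Matrix.diagonal_mul_diagonal]
    rw [show (fun i : Fin 2 => (star (if i = 0 then (γ t : A) else 1)) *
        (if i = 0 then (γ t : A) else 1)) = fun _ => (1 : A) from funext fun i => by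
      by_cases hi : i = 0 <;> simp [hi, Unitary.coe_star_mul_self (γ t)]]
    exact Matrix.diagonal_one
  refine ⟨⟨fun t =>
    Matrix.diagonal (fun i : Fin 2 => if i = 0 then (γ t : A) else 1) * e * star (u t),
    hwcont⟩, ?_, ?_, ?_⟩
  · simp only [ContinuousMap.coe_mk, hu0, hu1]
    have h0 : (γ 0 : A) = 1 := by rw [γ.source]; rfl
    have h1 : (γ 1 : A) = (v : A) := by rw [γ.target]
    rw [h0, h1, star_one, mul_one,
      show Matrix.diagonal (fun i : Fin 2 => if i = 0 then (1 : A) else 1) = 1 by simp,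
      one_mul, star_diag, he, Matrix.diagonal_mul_diagonal, Matrix.diagonal_mul_diagonal]
    exact diag_eq _ _ (fun i => by
      by_cases hi : i = 0 <;> simp [hi, Unitary.coe_mul_star_self v])
  · intro t
    simp only [ContinuousMap.coe_mk]
    calc star (Matrix.diagonal (fun i : Fin 2 => if i = 0 then (γ t : A) else 1) * e *
            star (u t)) *
          (Matrix.diagonal (fun i : Fin 2 => if i = 0 then (γ t : A) else 1) * e * star (u t))
        = u t * (star e *
            (star (Matrix.diagonal (fun i : Fin 2 => if i = 0 then (γ t : A) else 1)) *
             Matrix.diagonal (fun i : Fin 2 => if i = 0 then (γ t : A) else 1)) * e) *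
            star (u t) := by
          simp only [star_mul, star_star, mul_assoc]
      _ = u t * e * star (u t) := by rw [hdd t, mul_one, hestar, hee]
  · intro t
    simp only [ContinuousMap.coe_mk]
    have huu : star (u t) * u t = 1 := (Unitary.mem_iff.mp (hu t)).1
    calc (Matrix.diagonal (fun i : Fin 2 => if i = 0 then (γ t : A) else 1) * e * star (u t)) *
          star (Matrix.diagonal (fun i : Fin 2 => if i = 0 then (γ t : A) else 1) * e *
            star (u t))
        = Matrix.diagonal (fun i : Fin 2 => if i = 0 then (γ t : A) else 1) *
            (e * (star (u t) * u t) * star e) *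
            star (Matrix.diagonal (fun i : Fin 2 => if i = 0 then (γ t : A) else 1)) := by
          simp only [star_mul, star_star, mul_assoc]
      _ = e := by rw [huu, mul_one, hestar, hee, hded t]
end
end

section
/- Let A be a unital properly infinite C*-algebra. If the natural map U(A)/U⁰(A) → U₂(A)/U₂⁰(A) (induced by u ↦ diag(u,1)) is injective, then A is K₁-injective, i.e., the natural map U(A)/U⁰(A) → K₁(A) is injective. -/
noncomputable section

set_option linter.unusedSectionVars false

namespace Stmt14Aux

theorem joined_map {X Y : Type*} [TopologicalSpace X] [TopologicalSpace Y]
    {x y : X} (h : Joined x y) {f : X → Y} (hf : Continuous f) : Joined (f x) (f y) :=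
  ⟨h.somePath.map hf⟩

section fam
variable {R : Type*} [Ring R] [StarRing R]

theorem pow_isom {v : R} (hv : star v * v = 1) : ∀ k : ℕ, star (v ^ k) * v ^ k = 1 := by
  intro k
  induction k with
  | zero => simp
  | succ k ih =>
    rw [pow_succ, star_mul, mul_assoc, ← mul_assoc (star (v ^ k)), ih, one_mul, hv]

theorem isom_fam {v w : R} (hv : star v * v = 1) (hw : star w * w = 1)
    (hvw : star v * w = 0) (i j : ℕ) :
    star (v ^ i * w) * (v ^ j * w) = if i = j then 1 else 0 := by
  have hwv : star w * v = 0 := by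
    have := congrArg star hvw
    simpa [star_mul] using this
  have key : ∀ i j : ℕ, i ≤ j → star (v ^ i * w) * (v ^ j * w) = if i = j then 1 else 0 := by
    intro i j hij
    have hvij : star (v ^ i) * v ^ j = v ^ (j - i) := by
      rw [show j = i + (j - i) by omega, pow_add, ← mul_assoc, pow_isom hv, one_mul]
      congr 1
      omega
    rw [star_mul, mul_assoc, ← mul_assoc (star (v ^ i)), hvij]
    rcases eq_or_lt_of_le hij with rfl | hlt
    · simp [hw]
    · have : v ^ (j - i) = v * v ^ (j - i - 1) := by
        rw [← pow_succ']
        congr 1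
        omega
      rw [this, ← mul_assoc, ← mul_assoc, hwv]
      simp [hlt.ne]
  rcases le_or_gt i j with hij | hij
  · exact key i j hij
  · have h2 := congrArg star (key j i hij.le)
    rw [star_mul, star_star] at h2
    rw [h2]
    simp [hij.ne, hij.ne']
end fam


section matstuff
variable {A : Type*} [CStarAlgebra A] {n : ℕ}

theorem fmul (s : Fin (n+1) → A)
    (hs : ∀ i j, star (s i) * s j = if i = j then 1 else 0)
    (x y : Matrix (Fin (n+1)) (Fin (n+1)) A) :
    (∑ q : Fin (n+1) × Fin (n+1), s q.1 * (x * y) q.1 q.2 * star (s q.2))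
      = (∑ q : Fin (n+1) × Fin (n+1), s q.1 * x q.1 q.2 * star (s q.2)) *
        (∑ q : Fin (n+1) × Fin (n+1), s q.1 * y q.1 q.2 * star (s q.2)) := by
  rw [Finset.sum_mul_sum]
  have key : ∀ q r : Fin (n+1) × Fin (n+1),
      (s q.1 * x q.1 q.2 * star (s q.2)) * (s r.1 * y r.1 r.2 * star (s r.2))
        = if q.2 = r.1 then s q.1 * (x q.1 q.2 * y r.1 r.2) * star (s r.2) else 0 := by
    intro q r
    have h := hs q.2 r.1
    rcases eq_or_ne q.2 r.1 with he | he
    · rw [if_pos he]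
      rw [if_pos he] at h
      calc (s q.1 * x q.1 q.2 * star (s q.2)) * (s r.1 * y r.1 r.2 * star (s r.2))
          = s q.1 * x q.1 q.2 * ((star (s q.2) * s r.1) * (y r.1 r.2 * star (s r.2))) := by
            noncomm_ring
        _ = s q.1 * (x q.1 q.2 * y r.1 r.2) * star (s r.2) := by rw [h]; noncomm_ring
    · rw [if_neg he]
      rw [if_neg he] at h
      calc (s q.1 * x q.1 q.2 * star (s q.2)) * (s r.1 * y r.1 r.2 * star (s r.2))
          = s q.1 * x q.1 q.2 * ((star (s q.2) * s r.1) * (y r.1 r.2 * star (s r.2))) := by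
            noncomm_ring
        _ = 0 := by rw [h]; simp
  simp only [key, Matrix.mul_apply, Finset.mul_sum, Finset.sum_mul, Fintype.sum_prod_type]
  refine Finset.sum_congr rfl fun i _ => ?_
  rw [Finset.sum_comm]
  refine Finset.sum_congr rfl fun j _ => ?_
  conv_rhs => rw [Finset.sum_comm]
  simp [Finset.sum_ite_eq]


theorem stab_conn (s : Fin (n+1) → A)
    (hs : ∀ i j, star (s i) * s j = if i = j then 1 else 0)
    (u : A) (w : unitary (Matrix (Fin (n+1)) (Fin (n+1)) A))
    (hw : w.val = Matrix.diagonal (fun i => if i = 0 then u else 1))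
    (hjw : Joined 1 w) :
    ∃ u' : unitary A, u'.val = s 0 * u * star (s 0) + (1 - s 0 * star (s 0)) ∧
      Joined 1 u' := by
  set f : Matrix (Fin (n+1)) (Fin (n+1)) A → A :=
    fun m => ∑ q : Fin (n+1) × Fin (n+1), s q.1 * m q.1 q.2 * star (s q.2) with hf
  have hfmul : ∀ x y, f (x * y) = f x * f y := fun x y => fmul s hs x y
  have hfstar : ∀ x, f (star x) = star (f x) := by
    intro x
    simp only [hf, star_sum, star_mul, star_star, Matrix.star_apply,
      Fintype.sum_prod_type, mul_assoc]
    exact Finset.sum_comm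
  set p : A := f 1 with hp
  have hpp : p * p = p := by rw [hp, ← hfmul, one_mul]
  have hpstar : star p = p := by rw [hp, ← hfstar, star_one]
  have hfp : ∀ m, f m * p = f m := by intro m; rw [hp, ← hfmul, mul_one]
  have hpf : ∀ m, p * f m = f m := by intro m; rw [hp, ← hfmul, one_mul]
  have hmem : ∀ x : unitary (Matrix (Fin (n+1)) (Fin (n+1)) A),
      (f x.val + (1 - p)) ∈ unitary A := by
    intro x
    have hx := (Unitary.mem_iff.mp x.2)
    have hstar : star (f x.val + (1 - p)) = f (star x.val) + (1 - p) := by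
      rw [hfstar, star_add, star_sub, star_one, hpstar]
    have mixed : ∀ a b : Matrix (Fin (n+1)) (Fin (n+1)) A, star a * a = 1 →
        (f (star a) + (1 - p)) * (f a + (1 - p)) = 1 := by
      intro a b hab
      have e1 : f (star a) * f a = p := by rw [← hfmul, hab, hp]
      have e2 : f (star a) * (1 - p) = 0 := by rw [mul_sub, mul_one, hfp, sub_self]
      have e3 : (1 - p) * f a = 0 := by rw [sub_mul, one_mul, hpf, sub_self]
      have e4 : (1 - p) * (1 - p) = 1 - p := by
        rw [mul_sub, mul_one, sub_mul, one_mul, hpp]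
        abel
      rw [mul_add, add_mul, add_mul, e1, e2, e3, e4]
      abel
    constructor
    · rw [hstar]
      exact mixed x.val x.val hx.1
    · nth_rewrite 1 [show (f x.val + (1 - p)) = f (star (star x.val)) + (1 - p) by rw [star_star]]
      rw [show star (f x.val + (1 - p)) = f (star x.val) + (1 - p) from hstar]
      exact mixed (star x.val) (star x.val) (by rw [star_star, hx.2])
  have fcont : Continuous f := by
    rw [hf]
    apply continuous_finset_sum
    intro q _
    exact (continuous_const.mul (Continuous.matrix_elem continuous_id q.1 q.2)).mul
      continuous_const
  set g : unitary (Matrix (Fin (n+1)) (Fin (n+1)) A) → unitary A :=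
    fun x => ⟨f x.val + (1 - p), hmem x⟩ with hg
  have gcont : Continuous g := by
    apply Continuous.subtype_mk
    exact (fcont.comp continuous_subtype_val).add continuous_const
  have g1 : g 1 = 1 := by
    apply Subtype.ext
    show f (1 : Matrix (Fin (n+1)) (Fin (n+1)) A) + (1 - p) = 1
    rw [← hp]
    abel
  -- compute the sums
  have hfdiag : f w.val = s 0 * u * star (s 0) + ∑ i : Fin n, s i.succ * star (s i.succ) := by
    rw [hw, hf]
    simp only [Fintype.sum_prod_type, Matrix.diagonal_apply, mul_ite, ite_mul, mul_zero,
      zero_mul, Finset.sum_ite_eq, Finset.mem_univ, if_true]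
    rw [Fin.sum_univ_succ]
    simp [Fin.succ_ne_zero]
  have hpval : p = s 0 * star (s 0) + ∑ i : Fin n, s i.succ * star (s i.succ) := by
    rw [hp, hf]
    simp only [Fintype.sum_prod_type, Matrix.one_apply, mul_ite, ite_mul, mul_zero,
      zero_mul, Finset.sum_ite_eq, Finset.mem_univ, if_true, mul_one]
    rw [Fin.sum_univ_succ]
  refine ⟨g w, ?_, ?_⟩
  · show f w.val + (1 - p) = _
    rw [hfdiag, hpval]
    abel
  · have := joined_map hjw gcont
    rwa [g1] at this

end matstuff

section two
variable {R₀ : Type*} [Ring R₀] [StarRing R₀]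

def Dmat (c : R₀) : Matrix (Fin 2) (Fin 2) R₀ :=
  Matrix.diagonal (fun i => if i = 0 then c else 1)

def Rmat (s : R₀) : Matrix (Fin 2) (Fin 2) R₀ :=
  Matrix.of ![![s, 1 - s * star s], ![0, star s]]

theorem Dmat_mul (a b : R₀) : Dmat a * Dmat b = Dmat (a * b) := by
  rw [Dmat, Dmat, Dmat, Matrix.diagonal_mul_diagonal]
  exact congrArg Matrix.diagonal (funext fun i => by by_cases h0 : i = 0 <;> simp [h0])

theorem Dmat_one : Dmat (1 : R₀) = 1 := by
  rw [Dmat]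
  simp

theorem Dmat_star (a : R₀) : star (Dmat a) = Dmat (star a) := by
  rw [Dmat, Dmat, Matrix.star_eq_conjTranspose, Matrix.diagonal_conjTranspose]
  exact congrArg Matrix.diagonal (funext fun i => by by_cases h0 : i = 0 <;> simp [h0])

theorem star_fin_two (a b c d : R₀) :
    star !![a, b; c, d] = !![star a, star c; star b, star d] := by
  ext i j
  fin_cases i <;> fin_cases j <;> simp [Matrix.star_apply]

theorem Dmat_eq (c : R₀) : Dmat c = !![c, 0; 0, 1] := by
  ext i j
  fin_cases i <;> fin_cases j <;> simp [Dmat, Matrix.diagonal_apply]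

theorem Rmat_eq (s : R₀) : Rmat s = !![s, 1 - s * star s; 0, star s] := rfl

theorem Rmat_unitary {s : R₀} (hs : star s * s = 1) :
    Rmat s ∈ unitary (Matrix (Fin 2) (Fin 2) R₀) := by
  have hss : s * star s * s = s := by rw [mul_assoc, hs, mul_one]
  have hs' : star s * (s * star s) = star s := by rw [← mul_assoc, hs, one_mul]
  constructor
  · rw [Rmat_eq, star_fin_two, Matrix.mul_fin_two, Matrix.one_fin_two]
    ext i j
    fin_cases i <;> fin_cases j <;>
      · simp [mul_sub, sub_mul, hs, hss, hs', mul_assoc]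
        try abel
  · rw [Rmat_eq, star_fin_two, Matrix.mul_fin_two, Matrix.one_fin_two]
    ext i j
    fin_cases i <;> fin_cases j <;>
      · simp [mul_sub, sub_mul, hs, hss, hs', mul_assoc]
        try abel

theorem Rmat_conj {s : R₀} (hs : star s * s = 1) (c : R₀) :
    Rmat s * Dmat c * star (Rmat s) = Dmat (s * c * star s + (1 - s * star s)) := by
  have hss : s * star s * s = s := by rw [mul_assoc, hs, mul_one]
  have hs' : star s * (s * star s) = star s := by rw [← mul_assoc, hs, one_mul]
  rw [Rmat_eq, Dmat_eq, Dmat_eq, star_fin_two, Matrix.mul_fin_two, Matrix.mul_fin_two]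
  ext i j
  fin_cases i <;> fin_cases j <;>
    · simp [mul_sub, sub_mul, hs, hss, hs', mul_assoc]
      try abel

end two

variable {A : Type*} [CStarAlgebra A] in
theorem two_by_two (s : A) (hs : star s * s = 1) (u : unitary A)
    (u' : unitary A) (hu' : (u' : A) = s * u.val * star s + (1 - s * star s))
    (hj : Joined 1 u') :
    ∃ W : unitary (Matrix (Fin 2) (Fin 2) A),
      W.val = Matrix.diagonal (fun i => if i = 0 then u.val else 1) ∧ Joined 1 W := by
  have hRmem : Rmat s ∈ unitary (Matrix (Fin 2) (Fin 2) A) := Rmat_unitary hs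
  have hDmem : ∀ x : unitary A, Dmat x.val ∈ unitary (Matrix (Fin 2) (Fin 2) A) := by
    intro x
    have hx := Unitary.mem_iff.mp x.2
    constructor
    · rw [Dmat_star, Dmat_mul, hx.1, Dmat_one]
    · rw [Dmat_star, Dmat_mul, hx.2, Dmat_one]
  have hconj : Rmat s * Dmat u.val * star (Rmat s) = Dmat u'.val := by
    rw [hu']
    exact Rmat_conj hs u.val
  have hmem : ∀ x : unitary A, star (Rmat s) * Dmat x.val * Rmat s ∈
      unitary (Matrix (Fin 2) (Fin 2) A) :=
    fun x => mul_mem (mul_mem (Unitary.star_mem hRmem) (hDmem x)) hRmem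
  set h : unitary A → unitary (Matrix (Fin 2) (Fin 2) A) :=
    fun x => ⟨star (Rmat s) * Dmat x.val * Rmat s, hmem x⟩ with hh
  have Dcont : Continuous (Dmat : A → Matrix (Fin 2) (Fin 2) A) := by
    apply continuous_matrix
    intro i j
    by_cases hij : i = j
    · subst hij
      simp only [Dmat, Matrix.diagonal_apply_eq]
      by_cases h0 : i = 0
      · simp only [h0, if_true]; exact continuous_id
      · simp only [h0, if_false]; exact continuous_const
    · simp only [Dmat, Matrix.diagonal_apply_ne _ hij]; exact continuous_const
  have hcont : Continuous h := by
    apply Continuous.subtype_mk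
    exact (continuous_const.matrix_mul (Dcont.comp continuous_subtype_val)).matrix_mul
      continuous_const
  have h1 : h 1 = 1 := by
    apply Subtype.ext
    show star (Rmat s) * Dmat (1 : A) * Rmat s = 1
    rw [Dmat_one, mul_one, hRmem.1]
  have hu'val : h u' = ⟨Dmat u.val, hDmem u⟩ := by
    apply Subtype.ext
    show star (Rmat s) * Dmat u'.val * Rmat s = Dmat u.val
    rw [← hconj]
    calc star (Rmat s) * (Rmat s * Dmat u.val * star (Rmat s)) * Rmat s
        = (star (Rmat s) * Rmat s) * Dmat u.val * (star (Rmat s) * Rmat s) := by noncomm_ring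
      _ = Dmat u.val := by rw [hRmem.1, one_mul, mul_one]
  refine ⟨⟨Dmat u.val, hDmem u⟩, rfl, ?_⟩
  have := joined_map hj hcont
  rwa [h1, hu'val] at this


end Stmt14Aux

open Stmt14Aux in
/-- for a unital properly infinite C*-algebra, injectivity of the natural map
`U(A)/U⁰(A) → U₂(A)/U₂⁰(A)` implies `K₁`-injectivity. -/
theorem stmt14 {A : Type*} [CStarAlgebra A] (hA : IsProperlyInfinite (1 : A))
    (hinj : ∀ u : unitary A, ∀ w : unitary (Matrix (Fin 2) (Fin 2) A),
      w.val = Matrix.diagonal (fun i => if i = 0 then u.val else 1) →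
      Joined 1 w → Joined 1 u) :
    K1Injective A := by
  intro u hK
  obtain ⟨n, w, hw, hjw⟩ := hK
  obtain ⟨v, w0, hv, hw0, -, -, horth⟩ := hA
  have hvw : star v * w0 = 0 := by
    have h1 : star v * (v * star v * (w0 * star w0)) * w0 = star v * w0 := by
      calc star v * (v * star v * (w0 * star w0)) * w0
          = (star v * v) * ((star v * w0) * (star w0 * w0)) := by noncomm_ring
        _ = star v * w0 := by rw [hv, hw0, one_mul, mul_one]
    rw [← h1, horth, mul_zero, zero_mul]
  set sfam : Fin (n+1) → A := fun i => v ^ (i : ℕ) * w0 with hsfamdef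
  have hsfam : ∀ i j, star (sfam i) * sfam j = if i = j then 1 else 0 := by
    intro i j
    rw [hsfamdef]
    simp only
    rw [isom_fam hv hw0 hvw (i : ℕ) (j : ℕ)]
    by_cases h : i = j
    · simp [h]
    · rw [if_neg h, if_neg (fun hc => h (Fin.val_inj.mp hc))]
  obtain ⟨u', hu'val, hju'⟩ := stab_conn sfam hsfam u.val w hw hjw
  have hs0 : star (sfam 0) * sfam 0 = 1 := by simpa using hsfam 0 0
  obtain ⟨W, hWval, hjW⟩ := two_by_two (sfam 0) hs0 u u' hu'val hju'
  exact hinj u W hWval hjW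
end
end

section
/- Let X be a compact totally disconnected Hausdorff space and let A be a unital C(X)-algebra all of whose fibres A_x are properly infinite. Then A is properly infinite. -/
noncomputable section

/-!
Each fibre provides `s, t ∈ A` that are isometries with orthogonal ranges modulo `I_x`. Since
`I_x` is generated by functions vanishing at `x`, these relations hold up to `1/100` after
multiplying by the indicator `e` of a small clopen neighbourhood of `x`, and then also for every
smaller clopen set. As `e` is a central projection, functional calculus in the corner `e A`
(a polar-decomposition correction, applied once more after a Gram–Schmidt step) turns such
approximate relations into exact ones. A finite clopen partition of `X` subordinate to these
neighbourhoods then lets the corner isometries be added up to two isometries of `A` with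
orthogonal ranges.
-/

lemma abs_sub_one_le_of_mem_spectrum {A : Type*} [CStarAlgebra A] {g : A} {x : ℝ}
    (hx : x ∈ spectrum ℝ g) : |x - 1| ≤ ‖g - 1‖ := by
  cases subsingleton_or_nontrivial A
  · simp [spectrum.of_subsingleton] at hx
  have hx' : x - 1 ∈ spectrum ℝ (g - algebraMap ℝ A 1) := by
    rw [← spectrum.sub_singleton_eq]
    exact Set.sub_mem_sub hx rfl
  simpa using spectrum.norm_le_norm_of_mem hx'

/-- `h` plays the role of `g ^ (-1/2)`. -/
lemma IsSelfAdjoint.exists_invSqrt {A : Type*} [CStarAlgebra A] {g : A} (hg : IsSelfAdjoint g)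
    {δ : ℝ} (hδ : δ < 1) (hgδ : ‖g - 1‖ ≤ δ) :
    ∃ h : A, IsSelfAdjoint h ∧ h * g * h = 1 ∧ ‖h * h - 1‖ ≤ δ / (1 - δ) := by
  have hspec : ∀ x ∈ spectrum ℝ g, |x - 1| ≤ δ := fun x hx ↦
    (abs_sub_one_le_of_mem_spectrum hx).trans hgδ
  have hpos : ∀ x ∈ spectrum ℝ g, 1 - δ ≤ x := fun x hx ↦ by
    linarith [(abs_le.mp (hspec x hx)).1]
  have hx0 : ∀ x ∈ spectrum ℝ g, 0 < x := fun x hx ↦ by linarith [hpos x hx]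
  set f : ℝ → ℝ := fun x ↦ (Real.sqrt x)⁻¹
  have hf : ContinuousOn f (spectrum ℝ g) :=
    Real.continuous_sqrt.continuousOn.inv₀ fun x hx ↦ (Real.sqrt_pos.mpr (hx0 x hx)).ne'
  have hf_sq : ∀ x ∈ spectrum ℝ g, f x * f x = x⁻¹ := fun x hx ↦ by
    simp only [f, ← mul_inv, Real.mul_self_sqrt (hx0 x hx).le]
  refine ⟨cfc f g, cfc_predicate f g, ?_, ?_⟩
  · calc cfc f g * g * cfc f g = cfc (fun x ↦ f x * x * f x) g := by
          rw [cfc_mul .., cfc_mul f (fun x ↦ x) .., cfc_id' ℝ g]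
      _ = cfc (fun _ ↦ 1) g := cfc_congr fun x hx ↦ by
          rw [mul_right_comm, hf_sq x hx, inv_mul_cancel₀ (hx0 x hx).ne']
      _ = 1 := cfc_one ℝ g
  · rw [← cfc_mul .., ← cfc_one ℝ g, ← cfc_sub ..]
    refine norm_cfc_le (div_nonneg ((norm_nonneg _).trans hgδ) (sub_pos.mpr hδ).le)
      fun x hx ↦ ?_
    have hx' := hx0 x hx
    rw [hf_sq x hx, Pi.one_apply, Real.norm_eq_abs, show x⁻¹ - 1 = (1 - x) / x by field_simp,
      abs_div, abs_of_pos hx', abs_sub_comm]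
    exact div_le_div₀ ((norm_nonneg _).trans hgδ) (hspec x hx) (sub_pos.mpr hδ) (hpos x hx)

lemma norm_mul_le_of_approx {R : Type*} [NonUnitalSeminormedRing R] (p q a b : R) :
    ‖p * q‖ ≤ ‖p - a‖ * ‖q‖ + ‖a‖ * ‖q - b‖ + ‖a * b‖ := by
  have hpq : p * q = (p - a) * q + a * (q - b) + a * b := by noncomm_ring
  rw [hpq]
  exact (norm_add₃_le ..).trans (by gcongr <;> exact norm_mul_le _ _)

section OrthogonalIsometries

variable {R : Type*} [Ring R] [StarRing R]

def HasOrthogonalIsometries (e : R) : Prop :=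
  ∃ v w : R, star v * v = e ∧ star w * w = e ∧ star v * w = 0 ∧ e * v = v ∧ e * w = w

lemma HasOrthogonalIsometries.isProperlyInfinite_one (h : HasOrthogonalIsometries (1 : R)) :
    IsProperlyInfinite (1 : R) := by
  obtain ⟨v, w, hv, hw, hvw, -, -⟩ := h
  refine ⟨v, w, hv, hw, one_mul _, one_mul _, ?_⟩
  rw [mul_assoc, ← mul_assoc (star v), hvw, zero_mul, mul_zero]

lemma star_mul_eq_zero_of_mul_eq_zero {e f a b : R} (he : IsSelfAdjoint e) (hef : e * f = 0)
    (ha : e * a = a) (hb : f * b = b) : star a * b = 0 := by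
  rw [← ha, ← hb, star_mul, he.star_eq, mul_assoc, ← mul_assoc e, hef, zero_mul, mul_zero]

lemma HasOrthogonalIsometries.sum {ι : Type*} [Fintype ι] {e : ι → R}
    (hsa : ∀ i, IsSelfAdjoint (e i)) (horth : Pairwise fun i j ↦ e i * e j = 0)
    (h : ∀ i, HasOrthogonalIsometries (e i)) : HasOrthogonalIsometries (∑ i, e i) := by
  choose v w hv hw hvw hev hew using h
  have diag : ∀ f : ι → ι → R, (∀ i j, i ≠ j → f i j = 0) → ∑ i, ∑ j, f i j = ∑ i, f i i :=
    fun f hf ↦ Finset.sum_congr rfl fun i _ ↦ Fintype.sum_eq_single i fun j hj ↦ hf i j hj.symm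
  have hmul : ∀ {a : ι → R}, (∀ i, e i * a i = a i) → (∑ i, e i) * ∑ i, a i = ∑ i, a i :=
    fun {a} ha ↦ by
      rw [Finset.sum_mul_sum, diag _ fun i j hij ↦ by rw [← ha j, ← mul_assoc, horth hij, zero_mul]]
      simp only [ha]
  refine ⟨∑ i, v i, ∑ i, w i, ?_, ?_, ?_, hmul hev, hmul hew⟩
  · rw [star_sum, Finset.sum_mul_sum, diag _ fun i j hij ↦
      star_mul_eq_zero_of_mul_eq_zero (hsa i) (horth hij) (hev i) (hev j)]
    simp only [hv]
  · rw [star_sum, Finset.sum_mul_sum, diag _ fun i j hij ↦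
      star_mul_eq_zero_of_mul_eq_zero (hsa i) (horth hij) (hew i) (hew j)]
    simp only [hw]
  · rw [star_sum, Finset.sum_mul_sum, diag _ fun i j hij ↦
      star_mul_eq_zero_of_mul_eq_zero (hsa i) (horth hij) (hev i) (hew j)]
    simp only [hvw, Finset.sum_const_zero]

end OrthogonalIsometries

section CentralProjection

variable {A : Type*} [CStarAlgebra A] {e : A}

lemma norm_le_one_of_star_mul_self_eq (he : IsStarProjection e) {v : A}
    (hv : star v * v = e) : ‖v‖ ≤ 1 := by
  have : ‖v‖ * ‖v‖ ≤ 1 := by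
    rw [← CStarRing.norm_star_mul_self, hv]
    exact he.norm_le
  nlinarith [norm_nonneg v]

lemma norm_mul_mul_self_le_one_add (he : IsStarProjection e) (hc : ∀ a, Commute e a) {s : A}
    {δ : ℝ} (hs : ‖e * (star s * s - 1)‖ ≤ δ) : ‖e * s‖ * ‖e * s‖ ≤ 1 + δ := by
  have hse : star (e * s) * (e * s) = e * (star s * s - 1) + e := by
    rw [star_mul, he.isSelfAdjoint.star_eq, mul_assoc, ← mul_assoc e, he.isIdempotentElem.eq,
      ← mul_assoc, ← (hc _).eq]
    noncomm_ring
  rw [← CStarRing.norm_star_mul_self, hse, add_comm]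
  exact (norm_add_le _ _).trans (add_le_add he.norm_le hs)

/-- With `k = (1 + e * (star s * s - 1)) ^ (-1/2) * e`, `s * k` is the partial isometry in the
polar decomposition of `s * e`. -/
lemma exists_corner_isometry (he : IsStarProjection e) (hc : ∀ a, Commute e a) {s : A}
    (hs : ‖e * (star s * s - 1)‖ ≤ 1 / 100) :
    ∃ k : A, star (s * k) * (s * k) = e ∧ e * (s * k) = s * k ∧
      ‖s * k * star (s * k) - e * (s * star s)‖ ≤ 1 / 32 := by
  have hesa := he.isSelfAdjoint.star_eq
  have hmd : ∀ x y : A, x * (e * y) = e * (x * y) := fun x y ↦ ((hc x).left_comm y).symm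
  have hee : ∀ y : A, e * (e * y) = e * y := fun y ↦ by rw [← mul_assoc, he.isIdempotentElem.eq]
  set g : A := 1 + e * (star s * s - 1)
  have hg : IsSelfAdjoint g := .add (.one A) <|
    (he.isSelfAdjoint.commute_iff ((IsSelfAdjoint.star_mul_self s).sub (.one A))).mp (hc _)
  obtain ⟨h, hh, hgh, hh1⟩ := hg.exists_invSqrt (by norm_num) (δ := 1 / 100)
    (by simp only [g, add_sub_cancel_left]; exact hs)
  have hv : s * (h * e) = e * (s * h) := by rw [← (hc h).eq, hmd]
  refine ⟨h * e, ?_, ?_, ?_⟩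
  · calc star (s * (h * e)) * (s * (h * e)) = e * (h * g * h) := by
          simp only [hv, g, star_mul, hesa, hh.star_eq, mul_add, add_mul, mul_sub, sub_mul,
            mul_one, mul_assoc, hmd, hee]
          noncomm_ring
      _ = e := by rw [hgh, mul_one]
  · rw [hv, hee]
  · have hdiff : s * (h * e) * star (s * (h * e)) - e * (s * star s)
        = e * s * ((h * h - 1) * star (e * s)) := by
      simp only [hv, star_mul, hesa, hh.star_eq, ← (hc (star s)).eq, mul_sub, sub_mul, one_mul,
        mul_assoc, hmd, hee]
    have := norm_mul_mul_self_le_one_add he hc hs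
    calc ‖s * (h * e) * star (s * (h * e)) - e * (s * star s)‖
        ≤ ‖e * s‖ * (‖h * h - 1‖ * ‖e * s‖) := by
          rw [hdiff]
          refine (norm_mul_le _ _).trans ?_
          gcongr
          exact (norm_mul_le _ _).trans_eq (by rw [norm_star])
      _ = ‖h * h - 1‖ * (‖e * s‖ * ‖e * s‖) := by ring
      _ ≤ (1 / 100) / (1 - 1 / 100) * (1 + 1 / 100) := by gcongr
      _ ≤ 1 / 32 := by norm_num

lemma hasOrthogonalIsometries_of_approx (he : IsStarProjection e) (hc : ∀ a, Commute e a)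
    {s t : A} (hs : ‖e * (star s * s - 1)‖ ≤ 1 / 100) (ht : ‖e * (star t * t - 1)‖ ≤ 1 / 100)
    (hst : ‖e * (s * star s * (t * star t))‖ ≤ 1 / 100) : HasOrthogonalIsometries e := by
  have hesa := he.isSelfAdjoint.star_eq
  have hmd : ∀ x y : A, x * (e * y) = e * (x * y) := fun x y ↦ ((hc x).left_comm y).symm
  have hee : ∀ y : A, e * (e * y) = e * y := fun y ↦ by rw [← mul_assoc, he.isIdempotentElem.eq]
  obtain ⟨k, hvv, hev, hvp⟩ := exists_corner_isometry he hc hs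
  obtain ⟨l, huu, heu, hup⟩ := exists_corner_isometry he hc ht
  generalize s * k = v at hvv hev hvp
  generalize t * l = u at huu heu hup
  have hsv : star v * e = star v := by rw [← hesa, ← star_mul, hev]
  have hvsv : star v * (v * star v) = star v := by rw [← mul_assoc, hvv, (hc _).eq, hsv]
  have huuu : u * (star u * u) = u := by rw [huu, ← (hc u).eq, heu]
  have hpq : ‖v * star v * (u * star u)‖ ≤ 1 / 10 := by
    have hEs : ‖e * (s * star s)‖ ≤ 1 + 1 / 100 := by
      have : e * (s * star s) = e * s * star (e * s) := by
        simp only [star_mul, hesa, mul_assoc, ← (hc (star s)).eq, hmd, hee]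
      rw [this, CStarRing.norm_self_mul_star]
      exact norm_mul_mul_self_le_one_add he hc hs
    have hEst : e * (s * star s) * (e * (t * star t)) = e * (s * star s * (t * star t)) := by
      rw [mul_assoc, hmd, hee, mul_assoc]
    have hq : ‖u * star u‖ ≤ 1 := by
      rw [CStarRing.norm_self_mul_star]
      have := norm_le_one_of_star_mul_self_eq he huu
      exact mul_le_one₀ this (norm_nonneg _) this
    calc ‖v * star v * (u * star u)‖
        ≤ 1 / 32 * 1 + (1 + 1 / 100) * (1 / 32) + 1 / 100 := by
          refine (norm_mul_le_of_approx _ _ (e * (s * star s)) (e * (t * star t))).trans ?_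
          rw [hEst]
          gcongr
      _ ≤ 1 / 10 := by norm_num
  set c := star v * u
  have hec : e * c = c := by rw [← hmd, heu]
  have hc_small : ‖c‖ ≤ 1 / 10 := by
    have hc_eq : c = star v * (v * star v * (u * star u)) * u := by
      rw [← mul_assoc, ← mul_assoc, hvsv, mul_assoc, mul_assoc, huuu]
    rw [hc_eq]
    refine (norm_mul₃_le ..).trans ?_
    rw [norm_star]
    calc ‖v‖ * ‖v * star v * (u * star u)‖ * ‖u‖ ≤ 1 * (1 / 10) * 1 := by
          gcongr
          · exact norm_le_one_of_star_mul_self_eq he hvv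
          · exact norm_le_one_of_star_mul_self_eq he huu
      _ = 1 / 10 := by norm_num
  -- the part of `u` orthogonal to the range of `v`; its polar correction is the second isometry
  set x := (e - v * star v) * u
  have hx_eq : x = u - v * c := by simp only [x, c, sub_mul, heu, mul_assoc]
  have hxx : star x * x = e - star c * c := by
    have hcs : star u * v = star c := by simp only [c, star_mul, star_star]
    calc star x * x = star u * u - star u * v * c - star c * (star v * u)
          + star c * (star v * v) * c := by rw [hx_eq, star_sub, star_mul]; noncomm_ring
      _ = e - star c * c := by rw [huu, hcs, hvv, mul_assoc _ e, hec]; noncomm_ring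
  have hx : ‖e * (star x * x - 1)‖ ≤ 1 / 100 := by
    rw [hxx, show e * (e - star c * c - 1) = -(star c * (e * c)) by
      simp only [mul_sub, hmd, he.isIdempotentElem.eq, mul_one]; noncomm_ring, hec, norm_neg,
      CStarRing.norm_star_mul_self]
    nlinarith [norm_nonneg c]
  obtain ⟨m, hww, hew, -⟩ := exists_corner_isometry he hc hx
  refine ⟨v, x * m, hvv, hww, ?_, hev, hew⟩
  rw [← mul_assoc, ← mul_assoc, mul_sub, hsv, hvsv, sub_self, zero_mul, zero_mul]

end CentralProjection

open TopologicalSpace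
open scoped Function

section ClopenIndicator

variable {X : Type*} [TopologicalSpace X]

def clopenIndicator (U : Clopens X) : C(X, ℂ) := LocallyConstant.charFn ℂ U.isClopen

lemma clopenIndicator_apply (U : Clopens X) (x : X) :
    clopenIndicator U x = (U : Set X).indicator 1 x := rfl

lemma clopenIndicator_inf (U V : Clopens X) :
    clopenIndicator (U ⊓ V) = clopenIndicator U * clopenIndicator V := by
  ext x
  simp only [clopenIndicator_apply, Clopens.coe_inf, Set.inter_indicator_one,
    ContinuousMap.mul_apply, Pi.mul_apply]

lemma clopenIndicator_bot : clopenIndicator (⊥ : Clopens X) = 0 := by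
  ext x
  simp [clopenIndicator_apply]

lemma isStarProjection_clopenIndicator (U : Clopens X) :
    IsStarProjection (clopenIndicator U) where
  isIdempotentElem := by rw [IsIdempotentElem, ← clopenIndicator_inf, inf_idem]
  isSelfAdjoint := by
    ext x
    by_cases hx : x ∈ U <;> simp [clopenIndicator_apply, hx]

lemma sum_clopenIndicator_eq_one {ι : Type*} [Fintype ι] {W : ι → Clopens X}
    (hcover : Set.univ ⊆ ⋃ i, (W i : Set X)) (hdisj : Pairwise (Disjoint on W)) :
    ∑ i, clopenIndicator (W i) = 1 := by
  ext x
  obtain ⟨i, hi⟩ := Set.mem_iUnion.mp (hcover (Set.mem_univ x))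
  rw [ContinuousMap.sum_apply, Fintype.sum_eq_single i fun j hj ↦ ?_]
  · simp [clopenIndicator_apply, hi]
  · have hxj : x ∉ W j := fun hxj ↦ (hdisj hj).le_bot ⟨hxj, hi⟩
    simp [clopenIndicator_apply, hxj]

end ClopenIndicator

section Fibre

variable {X : Type*} [TopologicalSpace X] {A : Type*} [CStarAlgebra A]
  (Θ : C(X, ℂ) →⋆ₐ[ℂ] A)

lemma norm_clopenIndicator_le_one (U : Clopens X) : ‖Θ (clopenIndicator U)‖ ≤ 1 :=
  ((isStarProjection_clopenIndicator U).map Θ).norm_le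

lemma norm_clopenIndicator_mul_le_of_le {U V : Clopens X} (hUV : U ≤ V) (b : A) :
    ‖Θ (clopenIndicator U) * b‖ ≤ ‖Θ (clopenIndicator V) * b‖ := by
  calc ‖Θ (clopenIndicator U) * b‖
      = ‖Θ (clopenIndicator U) * (Θ (clopenIndicator V) * b)‖ := by
        rw [← mul_assoc, ← map_mul, ← clopenIndicator_inf, inf_eq_left.mpr hUV]
    _ ≤ ‖Θ (clopenIndicator V) * b‖ :=
        (norm_mul_le _ _).trans (mul_le_of_le_one_left (norm_nonneg _)
          (norm_clopenIndicator_le_one Θ U))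

def locallySmallAt (x : X) : Submodule ℂ A where
  carrier := {b | ∀ ε > 0, ∃ U : Clopens X, x ∈ U ∧ ‖Θ (clopenIndicator U) * b‖ ≤ ε}
  zero_mem' ε hε := ⟨⊤, trivial, by simpa using hε.le⟩
  add_mem' {b c} hb hc ε hε := by
    obtain ⟨U, hxU, hU⟩ := hb (ε / 2) (half_pos hε)
    obtain ⟨V, hxV, hV⟩ := hc (ε / 2) (half_pos hε)
    refine ⟨U ⊓ V, ⟨hxU, hxV⟩, ?_⟩
    rw [mul_add]
    refine (norm_add_le _ _).trans ?_
    linarith [norm_clopenIndicator_mul_le_of_le Θ (inf_le_left : U ⊓ V ≤ U) b,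
      norm_clopenIndicator_mul_le_of_le Θ (inf_le_right : U ⊓ V ≤ V) c]
  smul_mem' a b hb ε hε := by
    obtain ⟨U, hxU, hU⟩ := hb (ε / (‖a‖ + 1)) (by positivity)
    refine ⟨U, hxU, ?_⟩
    rw [mul_smul_comm, norm_smul]
    calc ‖a‖ * ‖Θ (clopenIndicator U) * b‖ ≤ ‖a‖ * (ε / (‖a‖ + 1)) := by gcongr
      _ ≤ ε := by
        rw [mul_div_assoc', div_le_iff₀ (by positivity)]
        nlinarith [norm_nonneg a]

lemma isClosed_locallySmallAt (x : X) : IsClosed (locallySmallAt Θ x : Set A) := by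
  refine isClosed_of_closure_subset fun b hb ε hε ↦ ?_
  obtain ⟨c, hc, hbc⟩ := Metric.mem_closure_iff.mp hb (ε / 2) (half_pos hε)
  obtain ⟨U, hxU, hU⟩ := hc (ε / 2) (half_pos hε)
  refine ⟨U, hxU, ?_⟩
  calc ‖Θ (clopenIndicator U) * b‖
      ≤ ‖Θ (clopenIndicator U) * (b - c)‖ + ‖Θ (clopenIndicator U) * c‖ := by
        have := norm_add_le (Θ (clopenIndicator U) * (b - c)) (Θ (clopenIndicator U) * c)
        rwa [← mul_add, sub_add_cancel] at this
    _ ≤ ‖b - c‖ + ε / 2 := by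
        gcongr
        exact (norm_mul_le _ _).trans (mul_le_of_le_one_left (norm_nonneg _)
          (norm_clopenIndicator_le_one Θ U))
    _ ≤ ε := by rw [← dist_eq_norm]; linarith

variable [CompactSpace X] [T2Space X] [TotallyDisconnectedSpace X]

lemma exists_clopen_norm_mul_le {f : C(X, ℂ)} {x : X} (hfx : f x = 0) {δ : ℝ} (hδ : 0 < δ) :
    ∃ U : Clopens X, x ∈ U ∧ ‖clopenIndicator U * f‖ ≤ δ := by
  obtain ⟨U, hU, hxU, hUf⟩ := compact_exists_isClopen_in_isOpen
    (Metric.isOpen_ball.preimage f.continuous) (show f x ∈ Metric.ball 0 δ by simpa [hfx])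
  refine ⟨⟨U, hU⟩, hxU, (ContinuousMap.norm_le _ hδ.le).mpr fun y ↦ ?_⟩
  by_cases hy : y ∈ U
  · simpa [clopenIndicator_apply, hy] using (mem_ball_zero_iff.mp (hUf hy)).le
  · simpa [clopenIndicator_apply, hy] using hδ.le

lemma fibreIdeal_subset_locallySmallAt (x : X) :
    fibreIdeal Θ {x} ⊆ locallySmallAt Θ x := by
  refine closure_minimal (Submodule.span_le.mpr ?_) (isClosed_locallySmallAt Θ x)
  rintro _ ⟨f, a, hf, rfl⟩ ε hε
  obtain ⟨U, hxU, hU⟩ := exists_clopen_norm_mul_le (hf x rfl) (δ := ε / (‖a‖ + 1)) (by positivity)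
  refine ⟨U, hxU, ?_⟩
  calc ‖Θ (clopenIndicator U) * (Θ f * a)‖ ≤ ‖clopenIndicator U * f‖ * ‖a‖ := by
        rw [← mul_assoc, ← map_mul]
        exact (norm_mul_le _ _).trans (by gcongr; exact NonUnitalStarAlgHom.norm_apply_le Θ _)
    _ ≤ ε / (‖a‖ + 1) * ‖a‖ := by gcongr
    _ ≤ ε := by
        rw [div_mul_eq_mul_div, div_le_iff₀ (by positivity)]
        nlinarith [norm_nonneg a]

lemma exists_clopen_nhds_hasOrthogonalIsometries
    (hcent : ∀ (f : C(X, ℂ)) (a : A), Θ f * a = a * Θ f) {x : X}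
    (hx : QuotProperlyInfinite (fibreIdeal Θ {x})) :
    ∃ U : Clopens X, x ∈ U ∧ ∀ V ≤ U, HasOrthogonalIsometries (Θ (clopenIndicator V)) := by
  obtain ⟨s, t, hs, ht, hst⟩ := hx
  have small : ∀ {b}, b ∈ fibreIdeal Θ {x} →
      ∃ U : Clopens X, x ∈ U ∧ ‖Θ (clopenIndicator U) * b‖ ≤ 1 / 100 := fun hb ↦
    fibreIdeal_subset_locallySmallAt Θ x hb _ (by norm_num)
  obtain ⟨U₁, hx₁, hU₁⟩ := small hs
  obtain ⟨U₂, hx₂, hU₂⟩ := small ht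
  obtain ⟨U₃, hx₃, hU₃⟩ := small hst
  refine ⟨U₁ ⊓ U₂ ⊓ U₃, ⟨⟨hx₁, hx₂⟩, hx₃⟩, fun V hV ↦ ?_⟩
  have restrict {U : Clopens X} (hVU : U₁ ⊓ U₂ ⊓ U₃ ≤ U) {b : A}
      (hb : ‖Θ (clopenIndicator U) * b‖ ≤ 1 / 100) : ‖Θ (clopenIndicator V) * b‖ ≤ 1 / 100 :=
    (norm_clopenIndicator_mul_le_of_le Θ (hV.trans hVU) b).trans hb
  exact hasOrthogonalIsometries_of_approx ((isStarProjection_clopenIndicator V).map Θ)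
    (fun a ↦ hcent _ a) (restrict (inf_le_left.trans inf_le_left) hU₁)
    (restrict (inf_le_left.trans inf_le_right) hU₂) (restrict inf_le_right hU₃)

end Fibre

/-- a unital `C(X)`-algebra over a compact totally disconnected Hausdorff space
with properly infinite fibres is properly infinite. -/
theorem stmt18 {X : Type*} [TopologicalSpace X] [CompactSpace X] [T2Space X]
    [TotallyDisconnectedSpace X] {A : Type*} [CStarAlgebra A]
    (Θ : C(X, ℂ) →⋆ₐ[ℂ] A) (hcent : ∀ (f : C(X, ℂ)) (a : A), Θ f * a = a * Θ f)
    (hfibres : ∀ x : X, QuotProperlyInfinite (fibreIdeal Θ {x})) :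
    IsProperlyInfinite (1 : A) := by
  choose U hxU hU using fun x ↦ exists_clopen_nhds_hasOrthogonalIsometries Θ hcent (hfibres x)
  have hcover : IsOpenCover fun x ↦ (U x).toOpens :=
    .of_sets (fun x ↦ (U x).isOpen) (Set.eq_univ_of_forall fun x ↦ Set.mem_iUnion.mpr ⟨x, hxU x⟩)
  obtain ⟨n, W, hWU, hWcover, hWdisj⟩ := hcover.exists_finite_nonempty_disjoint_clopen_cover
  have hW : HasOrthogonalIsometries (∑ j, Θ (clopenIndicator (W j))) := by
    refine .sum (fun j ↦ ((isStarProjection_clopenIndicator _).map Θ).isSelfAdjoint)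
      (fun i j hij ↦ ?_) fun j ↦ ?_
    · dsimp only
      rw [← map_mul, ← clopenIndicator_inf, (hWdisj hij).eq_bot, clopenIndicator_bot, map_zero]
    · obtain ⟨x, hWx⟩ := (hWU j).2
      exact hU x (W j) hWx
  rw [← map_sum, sum_clopenIndicator_eq_one hWcover hWdisj, map_one] at hW
  exact hW.isProperlyInfinite_one
end
end
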